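/- arXiv:1704.06624 — 4 statements merged into one kernel-verified Lean document; each statement's English description precedes it below -/
import Mathlib

section
/- Let f : [a,b] → [a,b] be a unimodal map with turning point c satisfying the standing convention, whose kneading sequence has height q(κ(f)) = m/n ∈ (0,1/2) (m/n in lowest terms), and suppose (w_{m/n}0)^∞ ≺ κ(f) ⪯ w_{m/n}0(w_{m/n}1)^∞ in the unimodal order. Then f^n(a) ≤ c, the image f^n([a, f^n(a))) equals [a, f^n(a)], and the image f^{n−1}([f(a), f^{n+1}(a)]) equals [a, f^n(a)]. -/
open Set

/-- Binary sequences. -/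
abbrev Bseq := ℕ → Fin 2

/-- The strict unimodal order on binary sequences: `α ≺ β` iff at the least index `r` where
they differ, the sum `∑_{i=0}^r α_i` is even. -/
def umLT (α β : Bseq) : Prop :=
  ∃ r : ℕ, (∀ i, i < r → α i = β i) ∧ α r ≠ β r ∧
    Even (∑ i ∈ Finset.range (r + 1), ((α i : ℕ)))

/-- `α ⪯ β` in the unimodal order. -/
def umLE (α β : Bseq) : Prop := umLT α β ∨ α = β

/-- The `r`-fold shift `σ^r`. -/
def shiftSeq (r : ℕ) (α : Bseq) : Bseq := fun i => α (i + r)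

/-- A sequence is maximal if all its shifts are `⪯` it. -/
def MaximalSeq (α : Bseq) : Prop := ∀ r : ℕ, umLE (shiftSeq r α) α

/-- Membership in `KS`: maximal sequences whose first two symbols are `10`. -/
def KSseq (α : Bseq) : Prop := MaximalSeq α ∧ α 0 = 1 ∧ α 1 = 0

/-- A (purely) periodic sequence. -/
def PeriodicSeq (α : Bseq) : Prop := ∃ p : ℕ, 0 < p ∧ ∀ i, α (i + p) = α i

/-- The periodic sequence `W^∞` determined by a finite word `W`. -/
def perSeq (W : List (Fin 2)) : Bseq := fun i => W.getD (i % W.length) 0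

/-- The sequence `V W^∞`. -/
def preperSeq (V W : List (Fin 2)) : Bseq :=
  fun i => if i < V.length then V.getD i 0 else perSeq W (i - V.length)

/-- The sequence `10 1^∞`. -/
def seq101 : Bseq := fun i => if i = 1 then 0 else 1

/-- The sequence `1σ²(α)`: `1` followed by `α₂ α₃ ⋯`. -/
def oneShift2 (α : Bseq) : Bseq := fun i => if i = 0 then 1 else α (i + 1)

/-- `κ_i(q)`: `κ_1(q) = ⌊1/q⌋ - 1`, and `κ_i(q) = ⌊i/q⌋ - ⌊(i-1)/q⌋ - 2` for `i ≥ 2`. -/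
noncomputable def kap (q : ℝ) (i : ℕ) : ℕ :=
  if i = 1 then (⌊1 / q⌋ - 1).toNat
  else (⌊(i : ℝ) / q⌋ - ⌊((i : ℝ) - 1) / q⌋ - 2).toNat

/-- The word `1 0^{κ_j(q)} 11 0^{κ_{j+1}(q)} 11 ⋯ 11 0^{κ_{j+M}(q)}`: an initial block
indexed `j` followed by `M` further blocks. -/
noncomputable def tailBody (q : ℝ) (j M : ℕ) : List (Fin 2) :=
  1 :: (List.replicate (kap q j) 0 ++
    (((List.range M).map fun t => 1 :: 1 :: List.replicate (kap q (j + 1 + t)) 0).flatten))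

/-- The word `c_q = 1 0^{κ_1(q)} 11 0^{κ_2(q)} 11 ⋯ 11 0^{κ_m(q)} 1`. -/
noncomputable def cqWord (q : ℝ) (m : ℕ) : List (Fin 2) := tailBody q 1 (m - 1) ++ [1]

/-- The word `w_q`, obtained from `c_q` by deleting its last two symbols. -/
noncomputable def wqWord (q : ℝ) (m : ℕ) : List (Fin 2) := (cqWord q m).dropLast.dropLast

/-- The word `ŵ_q`, the reverse of `w_q`. -/
noncomputable def hwqWord (q : ℝ) (m : ℕ) : List (Fin 2) := (wqWord q m).reverse

/-- The finite word `1 0^{κ_j(q)} 11 0^{κ_{j+1}(q)} ⋯ 11 0^{κ_m(q)} 1`. -/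
noncomputable def tailWord (q : ℝ) (j m : ℕ) : List (Fin 2) := tailBody q j (m - j) ++ [1]

/-- The word `1 0^{κ_1(q)-1} 11 0^{κ_2(q)} 11 ⋯` with `M` blocks after the first
(no closing `1`). -/
noncomputable def lowBody (q : ℝ) (M : ℕ) : List (Fin 2) :=
  1 :: (List.replicate (kap q 1 - 1) 0 ++
    (((List.range M).map fun t => 1 :: 1 :: List.replicate (kap q (2 + t)) 0).flatten))

/-- The finite word `1 0^{κ_1(q)-1} 11 0^{κ_2(q)} ⋯ 11 0^{κ_m(q)} 1`. -/
noncomputable def lowWord (q : ℝ) (m : ℕ) : List (Fin 2) := lowBody q (m - 1) ++ [1]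

/-- The infinite sequence `1 0^{κ_j(q)} 11 0^{κ_{j+1}(q)} 11 0^{κ_{j+2}(q)} 11 ⋯`. -/
noncomputable def tailSeq (q : ℝ) (j : ℕ) : Bseq := fun i => (tailBody q j (i + 1)).getD i 0

/-- The infinite sequence `1 0^{κ_1(q)-1} 11 0^{κ_2(q)} 11 0^{κ_3(q)} 11 ⋯`. -/
noncomputable def lowSeq (q : ℝ) : Bseq := fun i => (lowBody q (i + 1)).getD i 0

/-- The height `q(α) = inf({q ∈ (0,1/2] ∩ ℚ : (c_q0)^∞ ≺ α} ∪ {1/2})`. -/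
noncomputable def height (α : Bseq) : ℝ :=
  sInf ({x : ℝ | ∃ q : ℚ, x = (q : ℝ) ∧ 0 < q ∧ q ≤ 1 / 2 ∧
    umLT (perSeq (cqWord (q : ℝ) q.num.toNat ++ [0])) α} ∪ {1 / 2})

/-- A unimodal map `f : [a,b] → [a,b]` with turning point `c`. -/
structure Unimodal (a b c : ℝ) (f : ℝ → ℝ) : Prop where
  a_lt_b : a < b
  c_mem : c ∈ Ioo a b
  cont : ContinuousOn f (Icc a b)
  maps : MapsTo f (Icc a b) (Icc a b)
  mono : StrictMonoOn f (Icc a c)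
  anti : StrictAntiOn f (Icc c b)
  map_c : f c = b
  map_b : f b = a

/-- `α` is an itinerary of `x` under the unimodal map `f` with turning point `c`. -/
def IsItin (f : ℝ → ℝ) (a b c x : ℝ) (α : Bseq) : Prop :=
  ∀ r : ℕ, (α r = 0 → f^[r] x ∈ Icc a c) ∧ (α r = 1 → f^[r] x ∈ Icc c b)

/-- `κ` is the kneading sequence of `f`: the itinerary of `b` smallest in the unimodal order. -/
def IsKneading (f : ℝ → ℝ) (a b c : ℝ) (κ : Bseq) : Prop :=
  IsItin f a b c b κ ∧ ∀ β : Bseq, IsItin f a b c b β → umLE κ β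

/-- The standing convention on unimodal maps. -/
structure Convention (f : ℝ → ℝ) (a b c : ℝ) (κ : Bseq) : Prop where
  kneading : IsKneading f a b c κ
  gt101 : umLT seq101 κ
  itin_inj : ¬ PeriodicSeq κ → ∀ x ∈ Icc a b, ∀ y ∈ Icc a b, ∀ α : Bseq,
      IsItin f a b c x α → IsItin f a b c y α → x = y
  two_fixed : ∀ n : ℕ, 0 < n → ∀ μ : Bseq,
      {x | x ∈ Icc a b ∧ f^[n] x = x ∧ IsItin f a b c x μ}.encard ≤ 2 ∧
      ∀ x ∈ {x | x ∈ Icc a b ∧ f^[n] x = x ∧ IsItin f a b c x μ},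
        ∀ y ∈ {x | x ∈ Icc a b ∧ f^[n] x = x ∧ IsItin f a b c x μ},
          x ≠ y → ∃ r : ℕ, κ = shiftSeq r μ

/-! Write `n = |w| + 1`. The window `(w0)^∞ ≺ κ ⪯ w0(w1)^∞` forces `κ` to agree with `(w0)^∞`
on its first `2n - 1` symbols, and the next symbol is `1`: were it `0`, a parity count over two
periods would give `κ ≺ σ^{2n} κ`, hence `b ≤ f^{2n}(b)`, so `f^{2n-1}(b) = c` and `b` would be
periodic with itinerary `(w0)^∞ ≺ κ`, contradicting the minimality of `κ`.

Consequently the two ends of `J = [a, f^n(a)]` stay on a common lap under `f^0, …, f^{n-3}`,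
so `f^{n-2}` maps `J` onto `[f^{n-2}(a), f^{2n-2}(a)] ∋ c`, while the upper bound
`κ ⪯ w0(w1)^∞` gives `f^{n-1}(a) ≤ f^{2n-1}(a)`. Two more applications of `f` fold this interval
back onto `J`, and already its part left of `c`, which is covered from `[a, f^n(a))`, is folded
onto all of `J`. -/

open Function

section UnimodalOrder

open Finset

variable {α β : Bseq}

lemma fin_two_eq_zero_or_eq_one (s : Fin 2) : s = 0 ∨ s = 1 := by
  fin_cases s <;> simp

lemma fin_two_val_add_val_eq_one_of_ne {s t : Fin 2} (h : s ≠ t) : (s : ℕ) + t = 1 := by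
  have := Fin.val_ne_of_ne h
  omega

lemma sum_range_add_of_periodic {L : Bseq} {p : ℕ} (hper : Periodic L p) (s : ℕ) :
    ∑ i ∈ range (p + s), (L i : ℕ) = ∑ i ∈ range p, (L i : ℕ) + ∑ i ∈ range s, (L i : ℕ) := by
  rw [sum_range_add]
  congr 1
  exact sum_congr rfl fun i _ => by rw [add_comm, hper]

lemma exists_firstDiff_le {i : ℕ} (h : α i ≠ β i) :
    ∃ r ≤ i, (∀ j < r, α j = β j) ∧ α r ≠ β r := by
  classical
  have hex : ∃ r, α r ≠ β r := ⟨i, h⟩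
  exact ⟨Nat.find hex, Nat.find_min' hex h, fun j hj => not_not.1 (Nat.find_min hex hj),
    Nat.find_spec hex⟩

lemma even_sum_iff_not_even_of_firstDiff {r : ℕ} (hag : ∀ i < r, α i = β i) (hne : α r ≠ β r) :
    Even (∑ i ∈ range (r + 1), (α i : ℕ)) ↔ ¬ Even (∑ i ∈ range (r + 1), (β i : ℕ)) := by
  have hsum : ∑ i ∈ range r, (α i : ℕ) = ∑ i ∈ range r, (β i : ℕ) :=
    sum_congr rfl fun i hi => by rw [hag i (mem_range.1 hi)]
  have := fin_two_val_add_val_eq_one_of_ne hne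
  rw [sum_range_succ, sum_range_succ, hsum, Nat.even_iff, Nat.even_iff]
  omega

lemma umLT_iff_even_of_firstDiff {r : ℕ} (hag : ∀ i < r, α i = β i) (hne : α r ≠ β r) :
    umLT α β ↔ Even (∑ i ∈ range (r + 1), (α i : ℕ)) := by
  refine ⟨fun ⟨s, hags, hnes, hev⟩ => ?_, fun h => ⟨r, hag, hne, h⟩⟩
  obtain rfl : s = r := by
    rcases lt_trichotomy s r with h | h | h
    · exact absurd (hag s h) hnes
    · exact h
    · exact absurd (hags r h) hne
  exact hev

lemma umLT_asymm (h : umLT α β) : ¬ umLT β α := by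
  obtain ⟨r, hag, hne, hev⟩ := h
  rw [umLT_iff_even_of_firstDiff (fun i hi => (hag i hi).symm) (Ne.symm hne)]
  exact (even_sum_iff_not_even_of_firstDiff hag hne).1 hev

lemma not_umLE_of_umLT (h : umLT α β) : ¬ umLE β α := by
  rintro (h' | rfl)
  · exact umLT_asymm h h'
  · obtain ⟨_, _, hne, _⟩ := h
    exact hne rfl

lemma eq_of_umLT_of_umLE {L U κ : Bseq} (hL : umLT L κ) (hU : umLE κ U) {N : ℕ}
    (hLU : ∀ i < N, L i = U i) : ∀ i < N, κ i = L i := by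
  by_contra! h
  obtain ⟨i, hiN, hi⟩ := h
  obtain ⟨r, hri, hag, hne⟩ := exists_firstDiff_le hi
  have hrN : r < N := lt_of_le_of_lt hri hiN
  have hevL := (umLT_iff_even_of_firstDiff (fun j hj => (hag j hj).symm) (Ne.symm hne)).1 hL
  rcases hU with hU | rfl
  · have hagU : ∀ j < r, κ j = U j := fun j hj => by rw [hag j hj, hLU j (hj.trans hrN)]
    have hneU : κ r ≠ U r := by rw [← hLU r hrN]; exact hne
    have hevK := (umLT_iff_even_of_firstDiff hagU hneU).1 hU
    exact (even_sum_iff_not_even_of_firstDiff hag hne).1 hevK hevL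
  · exact hne (hLU r hrN).symm

lemma umLT_shiftSeq_of_periodic {L κ : Bseq} {p : ℕ} (hp : 0 < p) (hper : Periodic L p)
    (heven : Even (∑ i ∈ range p, (L i : ℕ))) (hL : umLT L κ) (hag : ∀ i < p, κ i = L i) :
    umLT κ (shiftSeq p κ) := by
  obtain ⟨r, hagr, hne, hev⟩ := hL
  have hpr : p ≤ r := by
    by_contra! h
    exact hne (hag r h).symm
  obtain ⟨s, rfl⟩ := Nat.exists_eq_add_of_le hpr
  have hκL : ∀ i ≤ s, κ i = L i := fun i hi => (hagr i (by omega)).symm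
  refine ⟨s, fun i hi => ?_, ?_, ?_⟩
  · simp only [shiftSeq]
    rw [hκL i hi.le, ← (hagr (i + p) (by omega)), hper]
  · simp only [shiftSeq]
    rw [hκL s le_rfl, ← hper, add_comm]
    exact hne
  · rw [add_assoc, sum_range_add_of_periodic hper, Nat.even_add] at hev
    rwa [sum_congr rfl fun i hi => by rw [hκL i (Nat.lt_succ_iff.1 (mem_range.1 hi))],
      ← hev]

lemma umLT_of_shiftSeq_eq {W : List (Fin 2)} (hW : 0 < W.length) {A τ : Bseq}
    (hA : ∀ i < W.length, A i = W.getD i 0) (hshift : shiftSeq W.length A = τ) {r : ℕ}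
    (hag : ∀ i < r, τ i = perSeq W i) (hne : τ r ≠ perSeq W r)
    (hodd : ¬ Even (∑ i ∈ range (r + 1), (τ i : ℕ))) : umLT A τ := by
  have hAW : ∀ i ≤ r, A i = perSeq W i := by
    intro i hi
    rcases lt_or_ge i W.length with h | h
    · rw [hA i h, perSeq, Nat.mod_eq_of_lt h]
    · obtain ⟨j, rfl⟩ := Nat.exists_eq_add_of_le h
      have hτ : τ j = A (W.length + j) := by rw [← hshift, shiftSeq, add_comm]
      rw [← hτ, hag j (by omega), perSeq, perSeq, Nat.add_mod_left]
  have hagA : ∀ i < r, A i = τ i := fun i hi => by rw [hAW i hi.le, hag i hi]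
  have hneA : A r ≠ τ r := by rw [hAW r le_rfl]; exact Ne.symm hne
  exact ⟨r, hagA, hneA, (even_sum_iff_not_even_of_firstDiff hagA hneA).2 hodd⟩

end UnimodalOrder

section Words

lemma perSeq_periodic (W : List (Fin 2)) : Periodic (perSeq W) W.length := fun i => by
  simp [perSeq]

lemma perSeq_of_lt {W : List (Fin 2)} {i : ℕ} (h : i < W.length) : perSeq W i = W.getD i 0 := by
  rw [perSeq, Nat.mod_eq_of_lt h]

lemma preperSeq_of_lt {V W : List (Fin 2)} {i : ℕ} (h : i < V.length) :
    preperSeq V W i = V.getD i 0 := if_pos h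

lemma preperSeq_length_add (V W : List (Fin 2)) (i : ℕ) :
    preperSeq V W (V.length + i) = perSeq W i := by
  simp [preperSeq]

variable (w : List (Fin 2))

lemma perSeq_append_periodic (s : Fin 2) : Periodic (perSeq (w ++ [s])) (w.length + 1) := by
  simpa using perSeq_periodic (w ++ [s])

lemma perSeq_append_periodic_two_mul (s : Fin 2) :
    Periodic (perSeq (w ++ [s])) (2 * (w.length + 1)) := by
  simpa using (perSeq_append_periodic w s).nat_mul 2

lemma perSeq_append_of_lt (s : Fin 2) {i : ℕ} (h : i < w.length) :
    perSeq (w ++ [s]) i = w.getD i 0 := by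
  rw [perSeq_of_lt (by simp only [List.length_append, List.length_singleton]; omega),
    List.getD_append _ _ _ _ h]

lemma perSeq_append_length (s : Fin 2) : perSeq (w ++ [s]) w.length = s := by
  rw [perSeq_of_lt (by simp)]
  simp

lemma preperSeq_append_length_add (i : ℕ) :
    preperSeq (w ++ [0]) (w ++ [1]) (w.length + 1 + i) = perSeq (w ++ [1]) i := by
  have h := preperSeq_length_add (w ++ [0]) (w ++ [1]) i
  rwa [List.length_append, List.length_singleton] at h

lemma preperSeq_eq_perSeq_of_lt {i : ℕ} (hi : i < 2 * w.length + 1) :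
    perSeq (w ++ [0]) i = preperSeq (w ++ [0]) (w ++ [1]) i := by
  rcases lt_or_ge i (w.length + 1) with h | h
  · rw [preperSeq_of_lt (by simpa using h), perSeq_of_lt (by simpa using h)]
  · obtain ⟨j, rfl⟩ := Nat.exists_eq_add_of_le h
    rw [preperSeq_append_length_add, add_comm, perSeq_append_periodic,
      perSeq_append_of_lt _ _ (by omega), perSeq_append_of_lt _ _ (by omega)]

lemma preperSeq_two_mul_length_add_one :
    preperSeq (w ++ [0]) (w ++ [1]) (2 * w.length + 1) = 1 := by
  rw [show 2 * w.length + 1 = w.length + 1 + w.length by ring, preperSeq_append_length_add,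
    perSeq_append_length]

lemma perSeq_append_two_mul_length_add_one (s : Fin 2) :
    perSeq (w ++ [s]) (2 * w.length + 1) = s := by
  rw [show 2 * w.length + 1 = w.length + (w.length + 1) by ring, perSeq_append_periodic,
    perSeq_append_length]

lemma even_sum_perSeq_append (s : Fin 2) :
    Even (∑ i ∈ Finset.range (2 * (w.length + 1)), (perSeq (w ++ [s]) i : ℕ)) := by
  rw [two_mul, sum_range_add_of_periodic (perSeq_append_periodic w s)]
  exact Even.add_self _

lemma shiftSeq_preperSeq_append :
    shiftSeq (2 * (w.length + 1)) (preperSeq (w ++ [0]) (w ++ [1]))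
      = shiftSeq (w.length + 1) (preperSeq (w ++ [0]) (w ++ [1])) := by
  funext i
  simp only [shiftSeq]
  rw [show i + 2 * (w.length + 1) = w.length + 1 + (i + (w.length + 1)) by ring,
    preperSeq_append_length_add, perSeq_append_periodic, add_comm i,
    preperSeq_append_length_add]

lemma preperSeq_not_periodic : ¬ PeriodicSeq (preperSeq (w ++ [0]) (w ++ [1])) := by
  rintro ⟨P, hP, hper⟩
  obtain ⟨Q, rfl⟩ : ∃ Q, P = Q + 1 := ⟨P - 1, by omega⟩
  have hUper := (Periodic.nat_mul hper (w.length + 1)) w.length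
  have hWper := (perSeq_append_periodic w 1).nat_mul Q w.length
  simp only [Nat.cast_id] at hUper hWper
  rw [show w.length + (w.length + 1) * (Q + 1) = w.length + 1 + (w.length + Q * (w.length + 1))
    by ring, preperSeq_append_length_add, hWper, perSeq_append_length, preperSeq_of_lt (by simp),
    List.getD_append_right _ _ _ _ le_rfl] at hUper
  simp at hUper

end Words

section WqWord

lemma floor_natCast_div_div (m n i : ℕ) : ⌊(i : ℝ) / ((m : ℝ) / n)⌋ = ((i * n / m : ℕ) : ℤ) := by
  rw [div_div_eq_mul_div, ← Nat.cast_mul, ← Int.natCast_floor_eq_floor (by positivity),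
    Nat.floor_div_eq_div]

variable {m n : ℕ}

lemma kap_one_add_one (hmn : 2 * m ≤ n) (hm : 0 < m) : kap ((m : ℝ) / n) 1 + 1 = n / m := by
  have h2 : 2 ≤ n / m := (Nat.le_div_iff_mul_le hm).2 (by omega)
  rw [kap, if_pos rfl, ← Nat.cast_one, floor_natCast_div_div, one_mul]
  omega

lemma kap_add_two (hmn : 2 * m ≤ n) (hm : 0 < m) (t : ℕ) :
    kap ((m : ℝ) / n) (t + 2) + 2 = (t + 2) * n / m - (t + 1) * n / m := by
  have h2 : 2 ≤ n / m := (Nat.le_div_iff_mul_le hm).2 (by omega)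
  have hstep : (t + 1) * n / m + n / m ≤ ((t + 1) * n + n) / m := Nat.div_add_div_le_add_div
  rw [show (t + 1) * n + n = (t + 2) * n by ring] at hstep
  rw [kap, if_neg (by omega), show ((t + 2 : ℕ) : ℝ) - 1 = ((t + 1 : ℕ) : ℝ) by push_cast; ring,
    floor_natCast_div_div, floor_natCast_div_div]
  omega

lemma length_tailBody_one (hmn : 2 * m ≤ n) (hm : 0 < m) :
    (tailBody ((m : ℝ) / n) 1 (m - 1)).length = n := by
  have hblock : ∀ t, kap ((m : ℝ) / n) (2 + t) + 1 + 1 = (t + 2) * n / m - (t + 1) * n / m :=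
    fun t => by rw [← kap_add_two hmn hm t, add_comm 2 t]
  have hmono : Monotone fun t => (t + 1) * n / m := fun s t hst =>
    Nat.div_le_div_right (Nat.mul_le_mul_right n (by omega))
  have hlist : ∀ g : ℕ → ℕ, ((List.range (m - 1)).map g).sum = ∑ t ∈ Finset.range (m - 1), g t :=
    fun g => by rw [Finset.sum_eq_multiset_sum]; rfl
  simp only [tailBody, List.length_cons, List.length_append, List.length_replicate,
    List.length_flatten, List.map_map, hlist, Function.comp_apply, hblock]
  rw [Finset.sum_range_tsub hmono, Nat.sub_add_cancel hm, Nat.mul_div_cancel_left n hm,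
    zero_add, one_mul]
  have := kap_one_add_one hmn hm
  have := Nat.div_le_self n m
  omega

lemma wqWord_eq_cons (hm : 0 < m) (hmn : 2 * m < n) :
    ∃ Y, wqWord ((m : ℝ) / n) m = 1 :: 0 :: Y ∧ Y.length + 3 = n := by
  have hlen := length_tailBody_one hmn.le hm
  have hone := kap_one_add_one hmn.le hm
  have h2 : 2 ≤ n / m := (Nat.le_div_iff_mul_le hm).2 (by omega)
  obtain ⟨Z, hZ⟩ : ∃ Z, tailBody ((m : ℝ) / n) 1 (m - 1) = 1 :: 0 :: Z := by
    rw [tailBody, show kap ((m : ℝ) / n) 1 = kap ((m : ℝ) / n) 1 - 1 + 1 by omega,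
      List.replicate_succ]
    exact ⟨_, rfl⟩
  rw [hZ] at hlen
  simp only [List.length_cons] at hlen
  have hZne : Z ≠ [] := List.ne_nil_of_length_pos (by omega)
  refine ⟨Z.dropLast, ?_, by simp only [List.length_dropLast]; omega⟩
  rw [wqWord, cqWord, List.dropLast_concat, hZ, List.dropLast_cons_of_ne_nil (by simp),
    List.dropLast_cons_of_ne_nil hZne]

end WqWord

namespace Unimodal

variable {a b c : ℝ} {f : ℝ → ℝ}

lemma image_Icc_of_le_turning (hU : Unimodal a b c f) {u v : ℝ} (hu : a ≤ u) (huv : u ≤ v)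
    (hv : v ≤ c) : f '' Icc u v = Icc (f u) (f v) :=
  have hsub : Icc u v ⊆ Icc a c := Icc_subset_Icc hu hv
  (hU.cont.mono (hsub.trans (Icc_subset_Icc_right hU.c_mem.2.le))).image_Icc_of_monotoneOn huv
    (hU.mono.monotoneOn.mono hsub)

lemma image_Icc_of_turning_le (hU : Unimodal a b c f) {u v : ℝ} (hu : c ≤ u) (huv : u ≤ v)
    (hv : v ≤ b) : f '' Icc u v = Icc (f v) (f u) :=
  have hsub : Icc u v ⊆ Icc c b := Icc_subset_Icc hu hv
  (hU.cont.mono (hsub.trans (Icc_subset_Icc_left hU.c_mem.1.le))).image_Icc_of_antitoneOn huv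
    (hU.anti.antitoneOn.mono hsub)

lemma image_uIcc_of_mem_lap (hU : Unimodal a b c f) {u v : ℝ}
    (h : (u ∈ Icc a c ∧ v ∈ Icc a c) ∨ (u ∈ Icc c b ∧ v ∈ Icc c b)) :
    f '' uIcc u v = uIcc (f u) (f v) := by
  rcases h with ⟨hu, hv⟩ | ⟨hu, hv⟩
  · have hsub := uIcc_subset_Icc hu hv
    exact (hU.cont.mono (hsub.trans (Icc_subset_Icc_right hU.c_mem.2.le))).image_uIcc_of_monotoneOn
      (hU.mono.monotoneOn.mono hsub)
  · have hsub := uIcc_subset_Icc hu hv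
    exact (hU.cont.mono (hsub.trans (Icc_subset_Icc_left hU.c_mem.1.le))).image_uIcc_of_antitoneOn
      (hU.anti.antitoneOn.mono hsub)

lemma eq_turning_of_map_eq (hU : Unimodal a b c f) {x : ℝ} (hx : x ∈ Icc a b) (h : f x = b) :
    x = c := by
  have hc : c ∈ Icc a c ∩ Icc c b := ⟨⟨hU.c_mem.1.le, le_rfl⟩, ⟨le_rfl, hU.c_mem.2.le⟩⟩
  rcases le_total x c with hxc | hxc
  · exact hU.mono.injOn ⟨hx.1, hxc⟩ hc.1 (h.trans hU.map_c.symm)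
  · exact hU.anti.injOn ⟨hxc, hx.2⟩ hc.2 (h.trans hU.map_c.symm)

end Unimodal

namespace IsItin

variable {a b c : ℝ} {f : ℝ → ℝ} {x y : ℝ} {α β : Bseq}

lemma mem_Icc (hU : Unimodal a b c f) (h : IsItin f a b c x α) : x ∈ Icc a b := by
  rcases fin_two_eq_zero_or_eq_one (α 0) with h0 | h0
  · exact Icc_subset_Icc_right hU.c_mem.2.le ((h 0).1 h0)
  · exact Icc_subset_Icc_left hU.c_mem.1.le ((h 0).2 h0)

lemma shift (h : IsItin f a b c x α) (k : ℕ) : IsItin f a b c (f^[k] x) (shiftSeq k α) :=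
  fun r => by simpa only [shiftSeq, ← iterate_add_apply] using h (r + k)

lemma of_isPeriodicPt {L : Bseq} {P : ℕ} (hP : 0 < P) (hx : IsPeriodicPt f P x)
    (hL : Periodic L P)
    (h : ∀ i < P, (L i = 0 → f^[i] x ∈ Icc a c) ∧ (L i = 1 → f^[i] x ∈ Icc c b)) :
    IsItin f a b c x L := fun r => by
  simpa only [hL.map_mod_nat, hx.iterate_mod_apply] using h (r % P) (Nat.mod_lt r hP)

open Finset in
lemma even_sum_of_lt (hU : Unimodal a b c f) {r : ℕ} :
    ∀ {x y : ℝ} {α β : Bseq}, IsItin f a b c x α → IsItin f a b c y β → x < y →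
      (∀ i < r, α i = β i) → α r ≠ β r → Even (∑ i ∈ range (r + 1), (α i : ℕ)) := by
  induction r with
  | zero =>
    intro x y α β hα hβ hxy _ hne
    rcases fin_two_eq_zero_or_eq_one (α 0) with h0 | h0
    · simp [h0]
    · have hβ0 : β 0 = 0 := by
        rcases fin_two_eq_zero_or_eq_one (β 0) with h | h
        · exact h
        · exact absurd (h0.trans h.symm) hne
      exact absurd (((hβ 0).1 hβ0).2.trans ((hα 0).2 h0).1) (not_le.2 hxy)
  | succ r ih =>
    intro x y α β hα hβ hxy hag hne
    have hag' : ∀ i < r, shiftSeq 1 α i = shiftSeq 1 β i := fun i hi => hag (i + 1) (by omega)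
    have h0 : α 0 = β 0 := hag 0 (by omega)
    rw [sum_range_succ']
    rcases fin_two_eq_zero_or_eq_one (α 0) with hα0 | hα0
    · have hfxy : f x < f y := hU.mono ((hα 0).1 hα0) ((hβ 0).1 (h0 ▸ hα0)) hxy
      simpa [hα0, shiftSeq] using ih (hα.shift 1) (hβ.shift 1) hfxy hag' hne
    · have hfyx : f y < f x := hU.anti ((hα 0).2 hα0) ((hβ 0).2 (h0 ▸ hα0)) hxy
      have hevβ := ih (hβ.shift 1) (hα.shift 1) hfyx (fun i hi => (hag' i hi).symm) (Ne.symm hne)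
      have hoddα := (even_sum_iff_not_even_of_firstDiff (fun i hi => (hag' i hi).symm)
        (Ne.symm hne)).1 hevβ
      simp only [hα0, Fin.val_one, Nat.even_add_one]
      exact hoddα

lemma le_of_umLT (hU : Unimodal a b c f) (hα : IsItin f a b c x α) (hβ : IsItin f a b c y β)
    (h : umLT β α) : y ≤ x := by
  by_contra! hxy
  obtain ⟨r, -, hne, -⟩ := id h
  obtain ⟨s, -, hag, hne⟩ := exists_firstDiff_le (Ne.symm hne)
  exact umLT_asymm h ⟨s, hag, hne, even_sum_of_lt hU hα hβ hxy hag hne⟩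

lemma image_iterate_uIcc (hU : Unimodal a b c f) (hα : IsItin f a b c x α)
    (hβ : IsItin f a b c y β) {k : ℕ} (hag : ∀ i < k, α i = β i) :
    f^[k] '' uIcc x y = uIcc (f^[k] x) (f^[k] y) := by
  induction k with
  | zero => simp
  | succ k ih =>
    rw [iterate_succ', image_comp, ih fun i hi => hag i (by omega), comp_apply, comp_apply]
    apply hU.image_uIcc_of_mem_lap
    rcases fin_two_eq_zero_or_eq_one (α k) with h | h
    · exact Or.inl ⟨(hα k).1 h, (hβ k).1 (hag k (by omega) ▸ h)⟩
    · exact Or.inr ⟨(hα k).2 h, (hβ k).2 (hag k (by omega) ▸ h)⟩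

end IsItin

namespace Unimodal

variable {a b c : ℝ} {f : ℝ → ℝ}

lemma image_comp_comp_eq_Icc (hU : Unimodal a b c f) {g : ℝ → ℝ} {p : ℝ} (hap : a ≤ p)
    (hg : ContinuousOn g (Icc a p)) (hImg : g '' Icc a p = Icc (g a) (g p))
    (hga : g a ∈ Icc a c) (hgp : g p ∈ Ioc c b) (hturn : c ≤ f (g a))
    (hcross : f (g a) ≤ f (g p)) (hret : f (f (g a)) = p) :
    (f ∘ f ∘ g) '' Icc a p = Icc a p ∧ (f ∘ f ∘ g) '' Ico a p = Icc a p := by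
  have hfga : f (g a) ≤ b := (hU.maps ⟨hga.1, hga.2.trans hU.c_mem.2.le⟩).2
  have hleft : f '' Icc (g a) c = Icc (f (g a)) b := by
    rw [hU.image_Icc_of_le_turning hga.1 hga.2 le_rfl, hU.map_c]
  have hback : f '' Icc (f (g a)) b = Icc a p := by
    rw [hU.image_Icc_of_turning_le hturn hfga le_rfl, hU.map_b, hret]
  have hIcc : (f ∘ f ∘ g) '' Icc a p = Icc a p := by
    rw [image_comp, image_comp, hImg, ← Icc_union_Icc_eq_Icc hga.2 hgp.1.le, image_union,
      hleft, hU.image_Icc_of_turning_le le_rfl hgp.1.le hgp.2, hU.map_c,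
      union_eq_left.2 (Icc_subset_Icc_left hcross), hback]
  refine ⟨hIcc, subset_antisymm ((image_mono Ico_subset_Icc_self).trans hIcc.le) ?_⟩
  calc Icc a p = f '' (f '' Icc (g a) c) := by rw [hleft, hback]
    _ ⊆ f '' (f '' (g '' Ico a p)) :=
      image_mono (image_mono ((Icc_subset_Ico_right hgp.1).trans (intermediate_value_Ico hap hg)))
    _ = (f ∘ f ∘ g) '' Ico a p := by rw [image_comp, image_comp]

end Unimodal

section Window

open Finset

variable (w : List (Fin 2)) {κ : Bseq}

lemma preperSeq_append_two_mul_length_add (i : ℕ) :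
    preperSeq (w ++ [0]) (w ++ [1]) (2 * (w.length + 1) + i) = perSeq (w ++ [1]) i := by
  have h := congrFun (shiftSeq_preperSeq_append w) i
  simp only [shiftSeq] at h
  rw [add_comm, h, add_comm, preperSeq_append_length_add]

lemma umLT_shiftSeq_of_umLT_preperSeq (hL : ∀ i < 2 * w.length + 1, κ i = perSeq (w ++ [0]) i)
    (hκ : κ (2 * w.length + 1) = 1) (hlt : umLT κ (preperSeq (w ++ [0]) (w ++ [1]))) :
    umLT (shiftSeq (w.length + 1) κ) (shiftSeq (2 * (w.length + 1)) κ) := by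
  have hagU : ∀ i < 2 * (w.length + 1), κ i = preperSeq (w ++ [0]) (w ++ [1]) i := by
    intro i hi
    rcases Nat.lt_or_ge i (2 * w.length + 1) with h | h
    · rw [hL i h, preperSeq_eq_perSeq_of_lt w h]
    · obtain rfl : i = 2 * w.length + 1 := by omega
      rw [hκ, preperSeq_two_mul_length_add_one]
  have hodd : ¬ Even (∑ i ∈ range (2 * (w.length + 1)), (κ i : ℕ)) := by
    have hne : κ (2 * w.length + 1) ≠ perSeq (w ++ [0]) (2 * w.length + 1) := by
      rw [hκ, perSeq_append_two_mul_length_add_one]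
      decide
    rw [show 2 * (w.length + 1) = 2 * w.length + 1 + 1 by ring,
      even_sum_iff_not_even_of_firstDiff hL hne, not_not]
    exact even_sum_perSeq_append w 0
  obtain ⟨R, hagR, hneR, hevR⟩ := hlt
  have hR : 2 * (w.length + 1) ≤ R := by
    by_contra! h
    exact hneR (hagU R h)
  obtain ⟨s, rfl⟩ := Nat.exists_eq_add_of_le hR
  refine umLT_of_shiftSeq_eq (W := w ++ [1]) (r := s) (by simp) (fun i hi => ?_) ?_
    (fun i hi => ?_) ?_ ?_
  · simp only [List.length_append, List.length_singleton] at hi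
    rw [shiftSeq, hagU _ (by omega), add_comm, preperSeq_append_length_add,
      perSeq_of_lt (by simpa using hi)]
  · funext i
    simp only [shiftSeq, List.length_append, List.length_singleton]
    ring_nf
  · rw [shiftSeq, hagR _ (by omega), add_comm, preperSeq_append_two_mul_length_add]
  · rwa [shiftSeq, add_comm, ← preperSeq_append_two_mul_length_add]
  · rw [add_assoc, sum_range_add, Nat.even_add] at hevR
    simpa only [shiftSeq, add_comm _ (2 * (w.length + 1)), hevR] using hodd

end Window

section Kneading

variable {a b c : ℝ} {f : ℝ → ℝ} {κ : Bseq} (w : List (Fin 2))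

lemma kneading_eq_perSeq_of_lt (h1 : umLT (perSeq (w ++ [0])) κ)
    (h2 : umLE κ (preperSeq (w ++ [0]) (w ++ [1]))) :
    ∀ i < 2 * w.length + 1, κ i = perSeq (w ++ [0]) i :=
  eq_of_umLT_of_umLE h1 h2 fun _ hi => preperSeq_eq_perSeq_of_lt w hi

lemma iterate_two_mul_length_add_one_ne (hU : Unimodal a b c f) (hK : IsKneading f a b c κ)
    (h1 : umLT (perSeq (w ++ [0])) κ) (h2 : umLE κ (preperSeq (w ++ [0]) (w ++ [1]))) :
    f^[2 * w.length + 1] b ≠ c := by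
  intro hc
  have hper : IsPeriodicPt f (2 * (w.length + 1)) b := by
    rw [IsPeriodicPt, IsFixedPt, show 2 * (w.length + 1) = 2 * w.length + 1 + 1 by ring,
      iterate_succ_apply', hc, hU.map_c]
  have hitin : IsItin f a b c b (perSeq (w ++ [0])) := by
    refine IsItin.of_isPeriodicPt (by omega) hper (perSeq_append_periodic_two_mul w 0)
      fun i hi => ?_
    rcases Nat.lt_or_ge i (2 * w.length + 1) with h | h
    · rw [← kneading_eq_perSeq_of_lt w h1 h2 i h]
      exact hK.1 i
    · obtain rfl : i = 2 * w.length + 1 := by omega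
      rw [perSeq_append_two_mul_length_add_one, hc]
      exact ⟨fun _ => ⟨hU.c_mem.1.le, le_rfl⟩, fun h => absurd h (by decide)⟩
  exact not_umLE_of_umLT h1 (hK.2 _ hitin)

lemma kneading_two_mul_length_add_one_eq_one (hU : Unimodal a b c f) (hK : IsKneading f a b c κ)
    (h1 : umLT (perSeq (w ++ [0])) κ) (h2 : umLE κ (preperSeq (w ++ [0]) (w ++ [1]))) :
    κ (2 * w.length + 1) = 1 := by
  refine (fin_two_eq_zero_or_eq_one _).resolve_left fun h0 => ?_
  have hag : ∀ i < 2 * (w.length + 1), κ i = perSeq (w ++ [0]) i := by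
    intro i hi
    rcases Nat.lt_or_ge i (2 * w.length + 1) with h | h
    · exact kneading_eq_perSeq_of_lt w h1 h2 i h
    · obtain rfl : i = 2 * w.length + 1 := by omega
      rw [h0, perSeq_append_two_mul_length_add_one]
  have hlt := umLT_shiftSeq_of_periodic (by omega) (perSeq_append_periodic_two_mul w 0)
    (even_sum_perSeq_append w 0) h1 hag
  have hle : b ≤ f^[2 * (w.length + 1)] b := (hK.1.shift _).le_of_umLT hU hK.1 hlt
  have hfix : f (f^[2 * w.length + 1] b) = b := by
    rw [← iterate_succ_apply' f]
    exact le_antisymm ((hK.1.shift _).mem_Icc hU).2 hle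
  exact iterate_two_mul_length_add_one_ne w hU hK h1 h2
    (hU.eq_turning_of_map_eq ((hK.1.shift _).mem_Icc hU) hfix)

lemma turning_lt_iterate_two_mul_length_add_one (hU : Unimodal a b c f)
    (hK : IsKneading f a b c κ) (h1 : umLT (perSeq (w ++ [0])) κ)
    (h2 : umLE κ (preperSeq (w ++ [0]) (w ++ [1]))) : c < f^[2 * w.length + 1] b :=
  lt_of_le_of_ne ((hK.1 _).2 (kneading_two_mul_length_add_one_eq_one w hU hK h1 h2)).1
    (iterate_two_mul_length_add_one_ne w hU hK h1 h2).symm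

lemma iterate_length_add_one_le_iterate_two_mul (hU : Unimodal a b c f) (hC : Convention f a b c κ)
    (h1 : umLT (perSeq (w ++ [0])) κ) (h2 : umLE κ (preperSeq (w ++ [0]) (w ++ [1]))) :
    f^[w.length + 1] b ≤ f^[2 * (w.length + 1)] b := by
  have hK := hC.kneading
  rcases h2 with hlt | rfl
  · exact (hK.1.shift _).le_of_umLT hU (hK.1.shift _) <|
      umLT_shiftSeq_of_umLT_preperSeq w (kneading_eq_perSeq_of_lt w h1 (Or.inl hlt))
        (kneading_two_mul_length_add_one_eq_one w hU hK h1 (Or.inl hlt)) hlt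
  · refine (hC.itin_inj (preperSeq_not_periodic w) _ ((hK.1.shift _).mem_Icc hU) _
      ((hK.1.shift _).mem_Icc hU) _ (hK.1.shift _) ?_).le
    rw [← shiftSeq_preperSeq_append]
    exact hK.1.shift _

lemma image_iterate_uIcc_of_window (hU : Unimodal a b c f) (hK : IsKneading f a b c κ)
    (h1 : umLT (perSeq (w ++ [0])) κ) (h2 : umLE κ (preperSeq (w ++ [0]) (w ++ [1]))) {j : ℕ}
    (hj : w.length = j + 1) :
    f^[j] '' uIcc a (f^[j + 2] a) = uIcc (f^[j] a) (f^[j] (f^[j + 2] a)) := by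
  have hκ := kneading_eq_perSeq_of_lt w h1 h2
  have h := (hK.1.shift 1).image_iterate_uIcc hU (hK.1.shift (j + 3)) (k := j) fun i hi => by
    simp only [shiftSeq]
    rw [hκ _ (by omega), hκ _ (by omega), show i + (j + 3) = i + 1 + (w.length + 1) by omega,
      perSeq_append_periodic]
  rwa [iterate_one, hU.map_b, iterate_succ_apply, hU.map_b] at h

end Kneading

theorem renormalization_window {a b c : ℝ} {f : ℝ → ℝ} {κ : Bseq} (hU : Unimodal a b c f)
    (hC : Convention f a b c κ) {w : List (Fin 2)} (hw0 : w.getD 0 0 = 1) (hw1 : w.getD 1 0 = 0)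
    (hlen : 2 ≤ w.length) (h1 : umLT (perSeq (w ++ [0])) κ)
    (h2 : umLE κ (preperSeq (w ++ [0]) (w ++ [1]))) {n : ℕ} (hn : w.length + 1 = n) :
    f^[n] a ≤ c ∧ f^[n] '' Ico a (f^[n] a) = Icc a (f^[n] a) ∧
      f^[n - 1] '' Icc (f a) (f^[n + 1] a) = Icc a (f^[n] a) := by
  obtain ⟨j, hj⟩ : ∃ j, w.length = j + 1 := ⟨w.length - 1, by omega⟩
  obtain rfl : n = j + 2 := by omega
  have hK := hC.kneading
  have hκ := kneading_eq_perSeq_of_lt w h1 h2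
  have hab : ∀ i, f^[i + 1] b = f^[i] a := fun i => by rw [iterate_succ_apply, hU.map_b]
  have hsucc : ∀ i, f^[i + 1] a = f (f^[i] a) := fun i => iterate_succ_apply' f i a
  have hperiod : ∀ i, perSeq (w ++ [0]) (i + (j + 2)) = perSeq (w ++ [0]) i := by
    rw [← hn]; exact perSeq_append_periodic w 0
  have hga : f^[j] a ∈ Icc a c := by
    rw [← hab]
    refine (hK.1 _).1 ?_
    rw [hκ _ (by omega), ← hj, perSeq_append_length]
  have hturn : c ≤ f (f^[j] a) := by
    rw [← hsucc, ← hab]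
    refine ((hK.1 _).2 ?_).1
    rw [hκ _ (by omega), show j + 1 + 1 = 0 + (j + 2) by ring, hperiod,
      perSeq_append_of_lt _ _ (by omega), hw0]
  have hp : f^[j + 2] a ∈ Icc a c := by
    rw [← hab]
    refine (hK.1 _).1 ?_
    rw [hκ _ (by omega), show j + 2 + 1 = 1 + (j + 2) by ring, hperiod,
      perSeq_append_of_lt _ _ (by omega), hw1]
  have hgp : f^[j] (f^[j + 2] a) ∈ Ioc c b := by
    rw [← iterate_add_apply, ← hab, show j + (j + 2) + 1 = 2 * w.length + 1 by omega]
    exact ⟨turning_lt_iterate_two_mul_length_add_one w hU hK h1 h2,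
      ((hK.1.shift _).mem_Icc hU).2⟩
  have hcross : f (f^[j] a) ≤ f (f^[j] (f^[j + 2] a)) := by
    have h := iterate_length_add_one_le_iterate_two_mul w hU hC h1 h2
    rw [hn, show 2 * (j + 2) = j + (j + 2) + 1 + 1 by ring] at h
    rwa [← hsucc, ← iterate_add_apply, ← hsucc, ← hab, ← hab]
  have hImg : f^[j] '' Icc a (f^[j + 2] a) = Icc (f^[j] a) (f^[j] (f^[j + 2] a)) := by
    rw [← uIcc_of_le hp.1, ← uIcc_of_le (hga.2.trans hgp.1.le)]
    exact image_iterate_uIcc_of_window w hU hK h1 h2 hj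
  have hcont : ContinuousOn f^[j] (Icc a (f^[j + 2] a)) :=
    (hU.cont.iterate hU.maps j).mono (Icc_subset_Icc_right (hp.2.trans hU.c_mem.2.le))
  obtain ⟨hIcc, hIco⟩ := hU.image_comp_comp_eq_Icc hp.1 hcont hImg hga hgp hturn hcross
    (by rw [← hsucc, ← hsucc])
  rw [show f ∘ f ∘ f^[j] = f^[j + 2] by rw [iterate_succ', iterate_succ']] at hIcc hIco
  refine ⟨hp.2, hIco, ?_⟩
  rw [show j + 2 - 1 = j + 1 by omega, hsucc, ← hU.image_Icc_of_le_turning le_rfl hp.1 hp.2,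
    ← image_comp, ← iterate_succ, hIcc]

theorem stmt6_general (a b c : ℝ) (f : ℝ → ℝ) (κ : Bseq)
    (hU : Unimodal a b c f) (hC : Convention f a b c κ)
    (m n : ℕ) (hm : 0 < m) (hn : 0 < n)
    (hq : (m : ℝ) / n < 1 / 2)
    (h1 : umLT (perSeq (wqWord ((m : ℝ) / n) m ++ [0])) κ)
    (h2 : umLE κ (preperSeq (wqWord ((m : ℝ) / n) m ++ [0]) (wqWord ((m : ℝ) / n) m ++ [1]))) :
    f^[n] a ≤ c ∧
    f^[n] '' Set.Ico a (f^[n] a) = Set.Icc a (f^[n] a) ∧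
    f^[n - 1] '' Set.Icc (f a) (f^[n + 1] a) = Set.Icc a (f^[n] a) := by
  have hmn : 2 * m < n := by
    rw [div_lt_div_iff₀ (by exact_mod_cast hn) two_pos, one_mul] at hq
    exact_mod_cast (by linarith : (2 * m : ℝ) < n)
  obtain ⟨Y, hw, hY⟩ := wqWord_eq_cons hm hmn
  rw [hw] at h1 h2
  exact renormalization_window hU hC rfl rfl (by simp) h1 h2
    (by simp only [List.length_cons]; omega)

/-- In the renormalization window `(w_q0)^∞ ≺ κ(f) ⪯ w_q0(w_q1)^∞` of height
`q = m/n`, one has `f^n(a) ≤ c`, `f^n([a, f^n(a))) = [a, f^n(a)]`, and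
`f^{n-1}([f(a), f^{n+1}(a)]) = [a, f^n(a)]`. -/
theorem stmt6 (a b c : ℝ) (f : ℝ → ℝ) (κ : Bseq)
    (hU : Unimodal a b c f) (hC : Convention f a b c κ)
    (m n : ℕ) (hm : 0 < m) (hn : 0 < n) (hcop : Nat.Coprime m n)
    (hq : (m : ℝ) / n < 1 / 2)
    (hheight : height κ = (m : ℝ) / n)
    (h1 : umLT (perSeq (wqWord ((m : ℝ) / n) m ++ [0])) κ)
    (h2 : umLE κ (preperSeq (wqWord ((m : ℝ) / n) m ++ [0]) (wqWord ((m : ℝ) / n) m ++ [1]))) :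
    f^[n] a ≤ c ∧
    f^[n] '' Set.Ico a (f^[n] a) = Set.Icc a (f^[n] a) ∧
    f^[n - 1] '' Set.Icc (f a) (f^[n + 1] a) = Set.Icc a (f^[n] a) :=
  stmt6_general a b c f κ hU hC m n hm hn hq h1 h2
end

section
/- Let α ∈ KS. Then q(α) = 0 if and only if α = 10^∞ (the sequence 1 followed by all 0s); and q(α) = 1/2 if and only if α ⪯ 101^∞ (the sequence 10 followed by all 1s) in the unimodal order. -/
/-!
The unimodal order is a strict total order in which `α ≺ β` depends only on finite prefixes
of `α` and `β`, and `10^∞` is its maximum. As `q → 0`, `κ_1(q) → ∞`, so `(c_q 0)^∞` begins with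
ever longer blocks `1 0^{κ_1(q)}`: every `α ≠ 10^∞` lies below `(c_q 0)^∞` for all small `q`,
whereas `10^∞` lies above all of them. For rational `0 < q < 1/2`, `(c_q 0)^∞` begins with
`10 1^{p-2} 0` for some even `p`, hence lies above `101^∞`; and for `q = j/(2j+1)` it agrees
with `101^∞` on its first `2j` symbols, so every `α` above `101^∞` lies above `(c_q 0)^∞` for
large `j`.
-/

open Set

def FirstDiff (α β : Bseq) (r : ℕ) : Prop := (∀ i < r, α i = β i) ∧ α r ≠ β r

lemma Fin.val_add_val_of_ne {x y : Fin 2} (h : x ≠ y) : (x : ℕ) + y = 1 := by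
  fin_cases x <;> fin_cases y <;> simp_all

lemma sum_range_val_congr {α β : Bseq} {n : ℕ} (h : ∀ i < n, α i = β i) :
    ∑ i ∈ Finset.range n, (α i : ℕ) = ∑ i ∈ Finset.range n, (β i : ℕ) :=
  Finset.sum_congr rfl fun i hi => by rw [h i (Finset.mem_range.mp hi)]

namespace FirstDiff

variable {α β : Bseq} {r s : ℕ}

lemma symm (h : FirstDiff α β r) : FirstDiff β α r :=
  ⟨fun i hi => (h.1 i hi).symm, h.2.symm⟩

lemma unique (hr : FirstDiff α β r) (hs : FirstDiff α β s) : r = s := by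
  rcases lt_trichotomy r s with h | h | h
  · exact absurd (hs.1 r h) hr.2
  · exact h
  · exact absurd (hr.1 s h) hs.2

lemma even_sum_iff_not (h : FirstDiff α β r) :
    Even (∑ i ∈ Finset.range (r + 1), (α i : ℕ)) ↔
      ¬ Even (∑ i ∈ Finset.range (r + 1), (β i : ℕ)) := by
  have hsum := Fin.val_add_val_of_ne h.2
  rw [Finset.sum_range_succ, Finset.sum_range_succ, sum_range_val_congr h.1]
  simp only [Nat.even_iff]
  omega

end FirstDiff

lemma exists_firstDiff {α β : Bseq} (h : α ≠ β) : ∃ r, FirstDiff α β r := by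
  classical
  have hex : ∃ r, α r ≠ β r := Function.ne_iff.mp h
  exact ⟨Nat.find hex, fun i hi => not_not.mp (Nat.find_min hex hi), Nat.find_spec hex⟩

lemma umLT_iff_exists_firstDiff {α β : Bseq} :
    umLT α β ↔ ∃ r, FirstDiff α β r ∧ Even (∑ i ∈ Finset.range (r + 1), (α i : ℕ)) := by
  simp only [umLT, FirstDiff, and_assoc]

lemma FirstDiff.umLT_iff {α β : Bseq} {r : ℕ} (h : FirstDiff α β r) :
    umLT α β ↔ Even (∑ i ∈ Finset.range (r + 1), (α i : ℕ)) := by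
  rw [umLT_iff_exists_firstDiff]
  exact ⟨fun ⟨s, hs, he⟩ => hs.unique h ▸ he, fun he => ⟨r, h, he⟩⟩

lemma umLT_iff_not_umLT {α β : Bseq} (h : α ≠ β) : umLT α β ↔ ¬ umLT β α := by
  obtain ⟨r, hr⟩ := exists_firstDiff h
  rw [hr.umLT_iff, hr.symm.umLT_iff, hr.even_sum_iff_not]

lemma umLT_irrefl (α : Bseq) : ¬ umLT α α := fun ⟨_, _, h, _⟩ => h rfl

lemma umLT.ne {α β : Bseq} (h : umLT α β) : α ≠ β := by
  rintro rfl
  exact umLT_irrefl α h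

lemma umLT.not_umLT {α β : Bseq} (h : umLT α β) : ¬ umLT β α :=
  (umLT_iff_not_umLT h.ne).mp h

lemma umLT_of_not_umLE {α β : Bseq} (h : ¬ umLE α β) : umLT β α := by
  simp only [umLE, not_or] at h
  exact (umLT_iff_not_umLT (Ne.symm h.2)).mpr h.1

lemma umLT_trans {α β γ : Bseq} (hαβ : umLT α β) (hβγ : umLT β γ) : umLT α γ := by
  obtain ⟨r, hr, hαr⟩ := umLT_iff_exists_firstDiff.mp hαβ
  obtain ⟨s, hs, hβs⟩ := umLT_iff_exists_firstDiff.mp hβγ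
  rcases lt_trichotomy r s with hrs | rfl | hsr
  · exact (FirstDiff.umLT_iff ⟨fun i hi => (hr.1 i hi).trans (hs.1 i (hi.trans hrs)),
      (hs.1 r hrs) ▸ hr.2⟩).mpr hαr
  · exact absurd hβs (hr.even_sum_iff_not.mp hαr)
  · have hαγ : FirstDiff α γ s :=
      ⟨fun i hi => (hr.1 i (hi.trans hsr)).trans (hs.1 i hi), (hr.1 s hsr).symm ▸ hs.2⟩
    rwa [hαγ.umLT_iff, sum_range_val_congr fun i hi => hr.1 i (by omega)]

lemma umLE.trans_umLT {α β γ : Bseq} (hαβ : umLE α β) (hβγ : umLT β γ) : umLT α γ := by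
  rcases hαβ with h | rfl
  exacts [umLT_trans h hβγ, hβγ]

lemma umLT.exists_forall_agree {α β : Bseq} (h : umLT α β) :
    ∃ n, ∀ α' β' : Bseq, (∀ i < n, α' i = α i) → (∀ i < n, β' i = β i) → umLT α' β' := by
  obtain ⟨r, hag, hne, hev⟩ := h
  refine ⟨r + 1, fun α' β' hα hβ => ⟨r, fun i hi => ?_, ?_, ?_⟩⟩
  · rw [hα i (by omega), hβ i (by omega), hag i hi]
  · rwa [hα r r.lt_succ_self, hβ r r.lt_succ_self]
  · rwa [sum_range_val_congr hα]

def seq10 : Bseq := fun i => if i = 0 then 1 else 0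

lemma sum_range_seq10 {n : ℕ} (hn : 1 ≤ n) : ∑ i ∈ Finset.range n, (seq10 i : ℕ) = 1 := by
  induction n, hn using Nat.le_induction with
  | base => rfl
  | succ n hn ih =>
    rw [Finset.sum_range_succ, ih]
    simp [seq10, show n ≠ 0 by omega]

lemma umLT_seq10_of_ne {α : Bseq} (h : α ≠ seq10) : umLT α seq10 := by
  obtain ⟨r, hr⟩ := exists_firstDiff h
  rw [umLT_iff_not_umLT h, hr.symm.umLT_iff, sum_range_seq10 r.succ_pos]
  decide

lemma sum_range_seq101 {n : ℕ} (hn : 2 ≤ n) : ∑ i ∈ Finset.range n, (seq101 i : ℕ) = n - 1 := by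
  induction n, hn using Nat.le_induction with
  | base => rfl
  | succ n hn ih =>
    rw [Finset.sum_range_succ, ih, show seq101 n = 1 from if_neg (by omega), Fin.val_one]
    omega

lemma seq101_umLT_of_agree {γ : Bseq} {p : ℕ} (hp : 2 ≤ p) (hpe : Even p)
    (hagree : ∀ i < p, γ i = seq101 i) (hγp : γ p = 0) : umLT seq101 γ := by
  have hdiff : FirstDiff seq101 γ p :=
    ⟨fun i hi => (hagree i hi).symm, by simp [seq101, hγp, show p ≠ 1 by omega]⟩
  rw [hdiff.umLT_iff, sum_range_seq101 (by omega : 2 ≤ p + 1)]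
  simpa using hpe

/-- `(c_q 0)^∞`. -/
noncomputable def cqSeq (q : ℚ) : Bseq := perSeq (cqWord (q : ℝ) q.num.toNat ++ [0])

def heightSet (α : Bseq) : Set ℝ :=
  {x : ℝ | ∃ q : ℚ, x = (q : ℝ) ∧ 0 < q ∧ q ≤ 1 / 2 ∧ umLT (cqSeq q) α}

lemma bddBelow_heightSet_union (α : Bseq) : BddBelow (heightSet α ∪ {1 / 2}) := by
  refine ⟨0, ?_⟩
  rintro x (⟨q, rfl, hq, -⟩ | rfl)
  · exact_mod_cast hq.le
  · norm_num

lemma height_le_of_umLT {α : Bseq} {q : ℚ} (hq0 : 0 < q) (hq : q ≤ 1 / 2)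
    (h : umLT (cqSeq q) α) : height α ≤ q :=
  csInf_le (bddBelow_heightSet_union α) (Or.inl ⟨q, rfl, hq0, hq, h⟩)

lemma height_le_half (α : Bseq) : height α ≤ 1 / 2 :=
  csInf_le (bddBelow_heightSet_union α) (Or.inr rfl)

lemma le_height {α : Bseq} {b : ℝ} (hb : b ≤ 1 / 2)
    (h : ∀ q : ℚ, 0 < q → q ≤ 1 / 2 → umLT (cqSeq q) α → b ≤ q) : b ≤ height α := by
  refine le_csInf ⟨1 / 2, Or.inr rfl⟩ ?_
  rintro x (⟨q, rfl, hq0, hq, hlt⟩ | rfl)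
  exacts [h q hq0 hq hlt, hb]

section Kap

variable {q : ℝ}

lemma le_kap_one (hq : 0 < q) {k : ℕ} (hk : q ≤ 1 / (k + 1)) : k ≤ kap q 1 := by
  have hfloor : (k + 1 : ℤ) ≤ ⌊1 / q⌋ := by
    rw [Int.le_floor, le_div_iff₀ hq]
    push_cast
    rwa [le_div_iff₀' (by positivity)] at hk
  simp only [kap, reduceIte]
  omega

lemma kap_one_add_one_s11 (hq : 0 < q) (hq2 : q ≤ 1 / 2) : (kap q 1 : ℤ) + 1 = ⌊1 / q⌋ := by
  have := le_kap_one hq (k := 1) (by norm_num [hq2])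
  simp only [kap, reduceIte] at this ⊢
  omega

lemma kap_add_two_s11 (hq : 0 < q) (hq2 : q ≤ 1 / 2) {i : ℕ} (hi : 2 ≤ i) :
    (kap q i : ℤ) + 2 = ⌊(i : ℝ) / q⌋ - ⌊((i : ℝ) - 1) / q⌋ := by
  have hstep : ⌊((i : ℝ) - 1) / q⌋ + 2 ≤ ⌊(i : ℝ) / q⌋ := by
    have h2q : 2 ≤ 1 / q := by rwa [le_div_iff₀ hq, ← le_div_iff₀' two_pos]
    rw [← Int.floor_add_intCast]
    refine Int.floor_mono ?_
    have : (i : ℝ) / q = ((i : ℝ) - 1) / q + 1 / q := by ring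
    push_cast
    linarith
  simp only [kap, if_neg (by omega : i ≠ 1)]
  omega

lemma floor_div_eq_two_mul_of_kap (hq : 0 < q) (hq2 : q ≤ 1 / 2) (h1 : kap q 1 = 1) {n : ℕ}
    (hzero : ∀ i, 2 ≤ i → i ≤ n → kap q i = 0) (hn : 1 ≤ n) : ⌊(n : ℝ) / q⌋ = 2 * n := by
  induction n, hn using Nat.le_induction with
  | base =>
    have := kap_one_add_one_s11 hq hq2
    rw [h1] at this
    push_cast
    omega
  | succ n hn ih =>
    have hk := kap_add_two_s11 hq hq2 (i := n + 1) (by omega)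
    rw [hzero (n + 1) (by omega) le_rfl, Nat.cast_add_one, add_sub_cancel_right,
      ih fun i hi hin => hzero i hi (by omega)] at hk
    push_cast
    omega

end Kap

lemma perSeq_eq_getD_of_prefix {P W : List (Fin 2)} (h : P <+: W) {i : ℕ} (hi : i < P.length) :
    perSeq W i = P.getD i 0 := by
  obtain ⟨R, rfl⟩ := h
  have hiW : i < (P ++ R).length := by rw [List.length_append]; omega
  rw [perSeq, Nat.mod_eq_of_lt hiW, List.getD_append _ _ _ _ hi]

/-- `11 0^{κ_2(q)} 11 0^{κ_3(q)} ⋯ 11 0^{κ_{M+1}(q)}`, the part of `c_q` after `1 0^{κ_1(q)}`. -/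
noncomputable def cqBlocks (q : ℝ) (M : ℕ) : List (Fin 2) :=
  ((List.range M).map fun t => (1 : Fin 2) :: 1 :: List.replicate (kap q (1 + 1 + t)) 0).flatten

lemma cqBlocks_succ (q : ℝ) (M : ℕ) :
    cqBlocks q (M + 1) = cqBlocks q M ++ 1 :: 1 :: List.replicate (kap q (M + 2)) 0 := by
  simp [cqBlocks, List.range_succ, add_comm]

lemma cqBlocks_prefix_of_le (q : ℝ) {M N : ℕ} (h : M ≤ N) : cqBlocks q M <+: cqBlocks q N := by
  induction N, h using Nat.le_induction with
  | base => exact List.prefix_refl _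
  | succ N _ ih => exact ih.trans (cqBlocks_succ q N ▸ List.prefix_append _ _)

lemma cqBlocks_eq_replicate (q : ℝ) {M : ℕ} (h : ∀ i < M, kap q (i + 2) = 0) :
    cqBlocks q M = List.replicate (2 * M) 1 := by
  induction M with
  | zero => rfl
  | succ M ih =>
    rw [cqBlocks_succ, ih fun i hi => h i (by omega), h M (by omega), mul_add,
      List.replicate_add]
    rfl

lemma cqWord_append_zero (q : ℝ) (m : ℕ) :
    cqWord q m ++ [0] = 1 :: (List.replicate (kap q 1) 0 ++ (cqBlocks q (m - 1) ++ [1, 0])) := by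
  simp [cqWord, tailBody, cqBlocks]

lemma cqBlocks_append_eq_cons (q : ℝ) (M : ℕ) : ∃ R, cqBlocks q M ++ [1, 0] = 1 :: R := by
  cases M with
  | zero => exact ⟨[0], rfl⟩
  | succ M =>
    exact ⟨(cqBlocks q (M + 1) ++ [1, 0]).tail, by simp [cqBlocks, List.range_succ_eq_map]⟩

lemma cqWord_prefix_seq10 (q : ℝ) (m : ℕ) :
    1 :: List.replicate (kap q 1) 0 ++ [1] <+: cqWord q m ++ [0] := by
  obtain ⟨R, hR⟩ := cqBlocks_append_eq_cons q (m - 1)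
  rw [cqWord_append_zero, hR]
  exact ⟨R, by simp⟩

lemma cqWord_prefix_seq101 (q : ℝ) {m : ℕ} (h1 : kap q 1 = 1) {n : ℕ} (hn : 2 ≤ n) (hnm : n ≤ m)
    (hzero : ∀ i, 2 ≤ i → i < n → kap q i = 0) (hpos : kap q n ≠ 0) :
    1 :: 0 :: List.replicate (2 * n - 2) 1 ++ [0] <+: cqWord q m ++ [0] := by
  obtain ⟨M, rfl⟩ : ∃ M, n = M + 2 := ⟨n - 2, by omega⟩
  have hblocks : cqBlocks q (M + 1) = List.replicate (2 * M + 2) 1 ++ 0 ::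
      List.replicate (kap q (M + 2) - 1) 0 := by
    rw [cqBlocks_succ, cqBlocks_eq_replicate q fun i hi => hzero (i + 2) (by omega) (by omega)]
    obtain ⟨k, hk⟩ := Nat.exists_eq_add_one_of_ne_zero hpos
    rw [hk, List.replicate_add (2 * M) 2, List.append_assoc]
    rfl
  have hprefix : List.replicate (2 * M + 2) 1 ++ [0] <+: cqBlocks q (m - 1) ++ [1, 0] := by
    have : List.replicate (2 * M + 2) 1 ++ [0] <+: cqBlocks q (M + 1) :=
      hblocks ▸ (List.prefix_append_right_inj _).mpr (by simp)
    exact this.trans ((cqBlocks_prefix_of_le q (by omega)).trans (List.prefix_append _ _))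
  rw [cqWord_append_zero, h1, show 2 * (M + 2) - 2 = 2 * M + 2 by omega]
  simpa using hprefix

lemma cqSeq_eq_seq10 (q : ℚ) {i : ℕ} (hi : i ≤ kap q 1) : cqSeq q i = seq10 i := by
  rw [cqSeq, perSeq_eq_getD_of_prefix (cqWord_prefix_seq10 _ _) (by grind)]
  rcases i with _ | i
  · rfl
  · simp [seq10, List.getD_eq_getElem?_getD, List.getElem?_append, show i < kap q 1 by omega]

lemma cqSeq_kap_one_add_one (q : ℚ) : cqSeq q (kap q 1 + 1) = 1 := by
  rw [cqSeq, perSeq_eq_getD_of_prefix (cqWord_prefix_seq10 _ _) (by simp)]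
  simp [List.getD_eq_getElem?_getD]

lemma cqSeq_umLT_seq10 (q : ℚ) : umLT (cqSeq q) seq10 := by
  refine umLT_seq10_of_ne fun h => ?_
  have := cqSeq_kap_one_add_one q
  rw [h] at this
  simp [seq10] at this

lemma cqSeq_eq_seq101 (q : ℚ) (h1 : kap q 1 = 1) {n : ℕ} (hn : 2 ≤ n) (hnm : n ≤ q.num.toNat)
    (hzero : ∀ i, 2 ≤ i → i < n → kap q i = 0) (hpos : kap q n ≠ 0) :
    (∀ i < 2 * n, cqSeq q i = seq101 i) ∧ cqSeq q (2 * n) = 0 := by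
  have hprefix := cqWord_prefix_seq101 (q : ℝ) h1 hn hnm hzero hpos
  constructor
  · intro i hi
    rw [cqSeq, perSeq_eq_getD_of_prefix hprefix (by grind)]
    rcases i with _ | _ | i
    · rfl
    · rfl
    · simp [seq101, List.getD_eq_getElem?_getD, List.getElem?_append, show i < 2 * n - 2 by omega]
  · set k := 2 * n - 2
    rw [cqSeq, perSeq_eq_getD_of_prefix hprefix (by grind), show 2 * n = k + 2 by omega]
    simp [List.getD_eq_getElem?_getD]

lemma Rat.cast_lt_half {q : ℚ} : (q : ℝ) < 1 / 2 ↔ q < 1 / 2 := by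
  rw [show (1 / 2 : ℝ) = ((1 / 2 : ℚ) : ℝ) by norm_num, Rat.cast_lt]

lemma Rat.num_toNat_div_self {q : ℚ} (hq : 0 < q) : (q.num.toNat : ℝ) / q = q.den := by
  have hnum : (q.num.toNat : ℝ) = q.num := by
    exact_mod_cast Int.toNat_of_nonneg (Rat.num_pos.mpr hq).le
  have hnum0 : (q.num : ℝ) ≠ 0 := by exact_mod_cast (Rat.num_pos.mpr hq).ne'
  rw [hnum, Rat.cast_def]
  field_simp

lemma seq101_umLT_cqSeq {q : ℚ} (hq0 : 0 < q) (hq : q < 1 / 2) : umLT seq101 (cqSeq q) := by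
  have hq0' : (0 : ℝ) < q := by exact_mod_cast hq0
  have hq' : (q : ℝ) ≤ 1 / 2 := (Rat.cast_lt_half.mpr hq).le
  rcases (le_kap_one hq0' (k := 1) (by norm_num [hq'])).lt_or_eq with hk2 | hk1
  · refine seq101_umLT_of_agree le_rfl even_two (fun i hi => ?_) (cqSeq_eq_seq10 q hk2)
    interval_cases i <;> rw [cqSeq_eq_seq10 q (by omega)] <;> rfl
  classical
  by_cases hex : ∃ n, 2 ≤ n ∧ n ≤ q.num.toNat ∧ kap q n ≠ 0
  · obtain ⟨hn, hnm, hpos⟩ := Nat.find_spec hex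
    have hzero : ∀ i, 2 ≤ i → i < Nat.find hex → kap q i = 0 := fun i hi hin =>
      not_not.mp fun hne => Nat.find_min hex hin ⟨hi, by omega, hne⟩
    obtain ⟨hagree, hp⟩ := cqSeq_eq_seq101 q hk1.symm hn hnm hzero hpos
    exact seq101_umLT_of_agree (by omega) (even_two_mul _) hagree hp
  · -- otherwise `c_q = (1 0 1^{2m-1} 0)^∞`, which forces `⌊m/q⌋ = 2m`, i.e. `q = 1/2`
    push Not at hex
    have hm : 1 ≤ q.num.toNat := by have := Rat.num_pos.mpr hq0; omega
    have hfloor := floor_div_eq_two_mul_of_kap hq0' hq' hk1.symm hex hm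
    rw [Rat.num_toNat_div_self hq0, Int.floor_natCast] at hfloor
    have hden : (q.den : ℚ) = 2 * q.num := by
      have := Int.toNat_of_nonneg (Rat.num_pos.mpr hq0).le
      exact_mod_cast this ▸ hfloor
    have hnum : (q.num : ℚ) ≠ 0 := by exact_mod_cast (Rat.num_pos.mpr hq0).ne'
    have : q = 1 / 2 := by
      rw [← Rat.num_div_den q, hden]
      field_simp
    exact absurd this hq.ne

lemma Rat.num_div_two_mul_add_one (j : ℕ) : ((j : ℚ) / (2 * j + 1)).num = j := by
  have hcop : Nat.Coprime (j : ℤ).natAbs (2 * (j : ℤ) + 1).natAbs := by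
    rw [show 2 * (j : ℤ) + 1 = ((2 * j + 1 : ℕ) : ℤ) by push_cast; ring]
    simp only [Int.natAbs_natCast, Nat.coprime_mul_right_add_right, Nat.coprime_one_right_eq_true]
  rw [show (j : ℚ) / (2 * j + 1) = ((j : ℤ) : ℚ) / ((2 * (j : ℤ) + 1 : ℤ) : ℚ) by push_cast; rfl]
  exact Rat.num_div_eq_of_coprime (by positivity) hcop

lemma floor_div_div_two_mul_add_one {j : ℕ} (hj : 0 < j) (x : ℕ) :
    ⌊(x : ℝ) / (j / (2 * j + 1))⌋ = 2 * x + (x / j : ℕ) := by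
  have hsplit : (x : ℝ) / (j / (2 * j + 1)) = ((2 * x : ℤ) : ℝ) + (x : ℝ) / j := by
    push_cast
    field_simp
  rw [hsplit, Int.floor_intCast_add, Int.floor_div_natCast, Int.floor_natCast]
  push_cast
  rfl

lemma kap_div_two_mul_add_one {j : ℕ} (hj : 2 ≤ j) :
    kap ((j : ℝ) / (2 * j + 1)) 1 = 1 ∧
      ∀ i, 2 ≤ i → i ≤ j → kap ((j : ℝ) / (2 * j + 1)) i = i / j := by
  have hfloor := floor_div_div_two_mul_add_one (by omega : 0 < j)
  refine ⟨?_, fun i hi hij => ?_⟩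
  · have := hfloor 1
    simp only [Nat.cast_one, Nat.div_eq_of_lt (by omega : 1 < j)] at this
    simp only [kap, reduceIte]
    rw [this]
    rfl
  · have hpred := hfloor (i - 1)
    rw [Nat.div_eq_of_lt (by omega : i - 1 < j), Nat.cast_sub (by omega : 1 ≤ i),
      Nat.cast_one] at hpred
    simp only [kap, if_neg (by omega : i ≠ 1), hfloor i, hpred]
    generalize i / j = d
    omega

lemma cqSeq_div_two_mul_add_one {j : ℕ} (hj : 2 ≤ j) {i : ℕ} (hi : i < 2 * j) :
    cqSeq ((j : ℚ) / (2 * j + 1)) i = seq101 i := by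
  have hcast : (((j : ℚ) / (2 * j + 1) : ℚ) : ℝ) = (j : ℝ) / (2 * j + 1) := by push_cast; ring
  obtain ⟨h1, hkap⟩ := kap_div_two_mul_add_one hj
  rw [← hcast] at h1 hkap
  refine (cqSeq_eq_seq101 _ h1 hj (by simp [Rat.num_div_two_mul_add_one])
    (fun i hi hij => ?_) ?_).1 i hi
  · rw [hkap i hi hij.le, Nat.div_eq_of_lt hij]
  · rw [hkap j hj le_rfl, Nat.div_self (by omega)]
    exact one_ne_zero

lemma height_pos_of_ne_seq10 {α : Bseq} (h : α ≠ seq10) : 0 < height α := by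
  obtain ⟨n, hn⟩ := (umLT_seq10_of_ne h).exists_forall_agree
  have hbound : (1 : ℝ) / (n + 2) ≤ 1 / (n + 1) := by gcongr; linarith
  refine (by positivity : (0 : ℝ) < 1 / (n + 2)).trans_le (le_height ?_ fun q hq0 _ hq => ?_)
  · gcongr
    linarith [n.cast_nonneg (α := ℝ)]
  · by_contra! hsmall
    have hkap : n ≤ kap q 1 := le_kap_one (by exact_mod_cast hq0) (hsmall.le.trans hbound)
    exact (hn α (cqSeq q) (fun _ _ => rfl)
      fun i hi => cqSeq_eq_seq10 q (by omega)).not_umLT hq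

lemma height_seq10 : height seq10 = 0 := by
  refine le_antisymm (le_of_forall_pos_lt_add fun ε hε => ?_)
    (le_height (by norm_num) fun q hq0 _ _ => by exact_mod_cast hq0.le)
  obtain ⟨n, hn⟩ := exists_nat_one_div_lt hε
  have hq0 : (0 : ℚ) < 1 / (n + 2) := by positivity
  have hq : (1 : ℚ) / (n + 2) ≤ 1 / 2 := by gcongr; linarith [n.cast_nonneg (α := ℚ)]
  calc height seq10 ≤ ((1 / (n + 2) : ℚ) : ℝ) := height_le_of_umLT hq0 hq (cqSeq_umLT_seq10 _)
    _ ≤ 1 / (n + 1) := by push_cast; gcongr; linarith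
    _ < 0 + ε := by rwa [zero_add]

lemma height_lt_half_of_not_umLE {α : Bseq} (h : ¬ umLE α seq101) : height α < 1 / 2 := by
  obtain ⟨n, hn⟩ := (umLT_of_not_umLE h).exists_forall_agree
  obtain ⟨j, hj, hjn⟩ : ∃ j, 2 ≤ j ∧ n ≤ 2 * j := ⟨n + 2, by omega, by omega⟩
  have hq0 : (0 : ℚ) < j / (2 * j + 1) :=
    div_pos (by exact_mod_cast (by omega : 0 < j)) (by positivity)
  have hq : (j : ℚ) / (2 * j + 1) < 1 / 2 := by
    rw [div_lt_div_iff₀ (by positivity) (by positivity)]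
    linarith
  calc height α ≤ (((j : ℚ) / (2 * j + 1) : ℚ) : ℝ) :=
        height_le_of_umLT hq0 hq.le
          (hn _ _ (fun i hi => cqSeq_div_two_mul_add_one hj (by omega)) fun _ _ => rfl)
    _ < 1 / 2 := Rat.cast_lt_half.mpr hq

lemma height_eq_half_of_umLE {α : Bseq} (h : umLE α seq101) : height α = 1 / 2 := by
  refine le_antisymm (height_le_half α) (le_height le_rfl fun q hq0 hq hlt => ?_)
  by_contra! hlt'
  exact (h.trans_umLT (seq101_umLT_cqSeq hq0 (Rat.cast_lt_half.mp hlt'))).not_umLT hlt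

theorem stmt11_general (α : Bseq) :
    (height α = 0 ↔ α = fun i => if i = 0 then 1 else 0) ∧
    (height α = 1 / 2 ↔ umLE α seq101) := by
  refine ⟨⟨fun h => ?_, fun h => h ▸ height_seq10⟩, ⟨fun h => ?_, height_eq_half_of_umLE⟩⟩
  · by_contra hne
    exact (height_pos_of_ne_seq10 hne).ne' h
  · by_contra hle
    exact (height_lt_half_of_not_umLE hle).ne h

/-- For `α ∈ KS`: `q(α) = 0 ↔ α = 10^∞`, and `q(α) = 1/2 ↔ α ⪯ 101^∞`. -/
theorem stmt11 (α : Bseq) (hα : KSseq α) :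
    (height α = 0 ↔ α = fun i => if i = 0 then 1 else 0) ∧
    (height α = 1 / 2 ↔ umLE α seq101) :=
  stmt11_general α
end

section
/- For every rational q = m/n ∈ (0,1/2) (in lowest terms), the sequence 10(ŵ_q1)^∞ is pre-periodic to (w_q1)^∞: there exists r ≥ 0 with σ^r(10(ŵ_q1)^∞) = (w_q1)^∞, where σ is the shift. -/
open Set

namespace Stmt14aux

/-- characteristic function of `c_q` -/
def fch (m n i : ℕ) : Fin 2 := if (i*m) % n < m ∨ n - m < (i*m) % n then 1 else 0
/-- characteristic function of `(w_q 1)^∞` -/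
def gch (m n i : ℕ) : Fin 2 := if ((i+1)*m) % n < 2*m then 1 else 0
/-- characteristic function of `(ŵ_q 1)^∞` -/
def hch (m n i : ℕ) : Fin 2 := if ((i+1)*m) % n = 0 ∨ n - 2*m < ((i+1)*m) % n then 1 else 0

lemma if_eq_if {C D : Prop} [Decidable C] [Decidable D] (h : C ↔ D) :
    (if C then (1 : Fin 2) else 0) = (if D then 1 else 0) := if_congr h rfl rfl

lemma getD_map_range (F : ℕ → Fin 2) {j k : ℕ} (h : j < k) :
    (((List.range k).map F).getD j 0) = F j := by
  rw [List.getD_eq_getElem _ _ (by simpa using h)]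
  simp

lemma floor_nat_div (a b : ℕ) : ⌊(a : ℝ) / (b : ℝ)⌋ = (a / b : ℕ) := by
  rw [← Int.natCast_floor_eq_floor (by positivity), Nat.floor_div_eq_div]

lemma map_range_add (F : ℕ → Fin 2) (a b : ℕ) :
    (List.range (a + b)).map F
      = (List.range a).map F ++ (List.range b).map (fun t => F (a + t)) := by
  rw [List.range_add, List.map_append, List.map_map]
  rfl

lemma map_range_two_add (F : ℕ → Fin 2) (e : ℕ) :
    (List.range (2 + e)).map F
      = F 0 :: F 1 :: (List.range e).map (fun t => F (2 + t)) := by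
  rw [map_range_add]
  rfl

lemma map_range_one_add (F : ℕ → Fin 2) (e : ℕ) :
    (List.range (1 + e)).map F = F 0 :: (List.range e).map (fun t => F (1 + t)) := by
  rw [map_range_add]
  rfl

lemma map_const_zero (F : ℕ → Fin 2) (e : ℕ) (h : ∀ t, t < e → F t = 0) :
    (List.range e).map F = List.replicate e 0 := by
  refine List.eq_replicate_iff.mpr ⟨by simp, ?_⟩
  intro b hb
  simp only [List.mem_map, List.mem_range] at hb
  obtain ⟨t, ht, rfl⟩ := hb
  exact h t ht

/-- value of `x % n` when `x < 2n` -/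
lemma mod_two_cases {x n : ℕ} (hn : 0 < n) (hx : x < 2 * n) :
    (x < n ∧ x % n = x) ∨ (n ≤ x ∧ x % n = x - n) := by
  rcases lt_or_ge x n with h | h
  · exact Or.inl ⟨h, Nat.mod_eq_of_lt h⟩
  · refine Or.inr ⟨h, ?_⟩
    rw [Nat.mod_eq_sub_mod h, Nat.mod_eq_of_lt (by omega)]

section Main

variable {m n : ℕ} (hm : 0 < m) (h2 : 2 * m < n)

include h2 in
lemma hn0 : 0 < n := by omega

include hm h2 in
lemma div_ge2 : 2 ≤ n / m := Nat.le_div_iff_mul_le hm |>.mpr (by omega)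

include hm h2 in
lemma gap_ge2 (j : ℕ) : (j * n) / m + 2 ≤ ((j + 1) * n) / m := by
  have h1 : j * n + m * 2 ≤ (j + 1) * n := by nlinarith
  calc (j * n) / m + 2 = (j * n + m * 2) / m := by
        rw [Nat.add_mul_div_left _ _ hm]
      _ ≤ ((j + 1) * n) / m := Nat.div_le_div_right h1

include hm h2 in
lemma kap_one : kap ((m : ℝ) / n) 1 = n / m - 1 := by
  have hn' : (0:ℝ) < (n:ℝ) := by exact_mod_cast hn0 h2
  have hm' : (0:ℝ) < (m:ℝ) := by exact_mod_cast hm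
  have hdiv : 1 / ((m : ℝ) / n) = ((1 * n : ℕ) : ℝ) / (m : ℕ) := by
    push_cast
    field_simp
  rw [kap, if_pos rfl, hdiv, floor_nat_div]
  have h2d : 2 ≤ (1 * n) / m := by simpa using div_ge2 hm h2
  have h1n : (1 * n) / m = n / m := by rw [one_mul]
  rw [h1n] at h2d ⊢
  set A := n / m
  omega

include hm h2 in
lemma kap_ge2 (i : ℕ) (hi : 2 ≤ i) :
    kap ((m : ℝ) / n) i = (i * n) / m - ((i - 1) * n) / m - 2 := by
  have hn' : (0:ℝ) < (n:ℝ) := by exact_mod_cast hn0 h2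
  have hm' : (0:ℝ) < (m:ℝ) := by exact_mod_cast hm
  have hd1 : (i : ℝ) / ((m : ℝ) / n) = ((i * n : ℕ) : ℝ) / (m : ℕ) := by
    push_cast; field_simp; try ring
  have hd2 : ((i : ℝ) - 1) / ((m : ℝ) / n) = (((i - 1) * n : ℕ) : ℝ) / (m : ℕ) := by
    have hcast : ((i : ℝ) - 1) = ((i - 1 : ℕ) : ℝ) := by
      rw [Nat.cast_sub (by omega : 1 ≤ i)]; norm_num
    rw [hcast]; push_cast; field_simp; try ring
  have hgap : ((i - 1) * n) / m + 2 ≤ (i * n) / m := by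
    have := gap_ge2 hm h2 (i - 1)
    have hi1 : i - 1 + 1 = i := by omega
    rwa [hi1] at this
  rw [kap, if_neg (by omega), hd1, hd2, floor_nat_div, floor_nat_div]
  set A := (i * n) / m
  set B := ((i - 1) * n) / m
  omega

include hm in
lemma f_zero : fch m n 0 = 1 := by
  rw [fch, if_pos]
  left
  simpa using hm

include hm in
lemma emod_pos (hcop : Nat.Coprime m n) {j : ℕ} (hj0 : 0 < j) (hjm : j < m) :
    0 < (j * n) % m := by
  rcases Nat.eq_zero_or_pos ((j * n) % m) with h | h
  · exfalso
    have hdvd : m ∣ j * n := Nat.dvd_of_mod_eq_zero h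
    have hj : m ∣ j := Nat.Coprime.dvd_of_dvd_mul_right hcop hdvd
    have := Nat.le_of_dvd hj0 hj
    omega
  · exact h

include hm h2 in
lemma f_at_P (hcop : Nat.Coprime m n) {j : ℕ} (hj0 : 0 < j) (hjm : j < m) :
    fch m n ((j * n) / m) = 1 := by
  simp only [fch]
  set P := (j * n) / m with hP
  set e := (j * n) % m with he
  have key : P * m + e = j * n := by rw [hP, he, mul_comm]; exact Nat.div_add_mod _ _
  have he1 : 0 < e := emod_pos hm hcop hj0 hjm
  have hem : e < m := Nat.mod_lt _ hm
  have hjn : n ≤ j * n := Nat.le_mul_of_pos_left n hj0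
  have keyz : (P : ℤ) * m + e = j * n := by exact_mod_cast key
  have hjnz : (n : ℤ) ≤ j * n := by exact_mod_cast hjn
  have hrep : P * m = (n - e) + (j - 1) * n := by
    zify [show e ≤ n by omega, hj0]
    linarith
  have hmod : (P * m) % n = n - e := by
    rw [hrep, Nat.add_mul_mod_self_right]
    exact Nat.mod_eq_of_lt (by omega)
  rw [hmod, if_pos (Or.inr (by omega))]

include hm h2 in
lemma f_at_P1 (hcop : Nat.Coprime m n) {j : ℕ} (hj0 : 0 < j) (hjm : j < m) :
    fch m n ((j * n) / m + 1) = 1 := by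
  simp only [fch]
  set P := (j * n) / m with hP
  set e := (j * n) % m with he
  have key : P * m + e = j * n := by rw [hP, he, mul_comm]; exact Nat.div_add_mod _ _
  have he1 : 0 < e := emod_pos hm hcop hj0 hjm
  have hem : e < m := Nat.mod_lt _ hm
  have keyz : (P : ℤ) * m + e = j * n := by exact_mod_cast key
  have hrep : (P + 1) * m = (m - e) + j * n := by
    zify [show e ≤ m by omega]
    linarith
  have hmod : ((P + 1) * m) % n = m - e := by
    rw [hrep, Nat.add_mul_mod_self_right]
    exact Nat.mod_eq_of_lt (by omega)
  rw [hmod, if_pos (Or.inl (by omega))]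

include hm h2 in
lemma f_mid {j : ℕ} (hj0 : 0 < j) (i : ℕ)
    (hi1 : (j * n) / m + 2 ≤ i) (hi2 : i < ((j + 1) * n) / m) :
    fch m n i = 0 := by
  simp only [fch]
  set P := (j * n) / m with hP
  set P' := ((j + 1) * n) / m with hP'
  set e := (j * n) % m with he
  have key : P * m + e = j * n := by rw [hP, he, mul_comm]; exact Nat.div_add_mod _ _
  have hem : e < m := Nat.mod_lt _ hm
  have hmul : (P + 2) * m ≤ i * m := Nat.mul_le_mul_right _ hi1
  have hmul2 : (i + 1) * m ≤ P' * m := Nat.mul_le_mul_right _ hi2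
  have hP'm : P' * m ≤ (j + 1) * n := Nat.div_mul_le_self _ _
  have keyz : (P : ℤ) * m + e = j * n := by exact_mod_cast key
  have hmulz : ((P : ℤ) + 2) * m ≤ i * m := by exact_mod_cast hmul
  have hmul2z : ((i : ℤ) + 1) * m ≤ P' * m := by exact_mod_cast hmul2
  have hP'mz : (P' : ℤ) * m ≤ ((j : ℤ) + 1) * n := by exact_mod_cast hP'm
  have hlow : j * n + (m + 1) ≤ i * m := by
    zify
    nlinarith [keyz, hmulz, hem]
  have hup : i * m + m ≤ j * n + n := by
    zify
    nlinarith [hmul2z, hP'mz]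
  have hle : j * n ≤ i * m := by
    calc j * n ≤ j * n + (m + 1) := Nat.le_add_right _ _
      _ ≤ i * m := hlow
  set R := i * m - j * n with hR
  have hrep : i * m = R + j * n := (Nat.sub_add_cancel hle).symm
  have hb1 : m + 1 ≤ R := by zify [hle]; zify at hlow; linarith
  have hb2 : R + m ≤ n := by zify [hle]; zify at hup; linarith
  have hmod : (i * m) % n = R := by
    rw [hrep, Nat.add_mul_mod_self_right]
    exact Nat.mod_eq_of_lt (by omega)
  rw [hmod, if_neg (by omega)]

include hm h2 in
lemma f_low (i : ℕ) (h1 : 1 ≤ i) (h2i : i < n / m) : fch m n i = 0 := by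
  simp only [fch]
  have hmul2 : (i + 1) * m ≤ (n / m) * m := Nat.mul_le_mul_right _ h2i
  have hdm : (n / m) * m ≤ n := Nat.div_mul_le_self _ _
  have him : 1 * m ≤ i * m := Nat.mul_le_mul_right _ h1
  have hub : i * m + m ≤ n := by
    have h3 : (i + 1) * m = i * m + m := by ring
    calc i * m + m = (i + 1) * m := h3.symm
      _ ≤ (n / m) * m := hmul2
      _ ≤ n := hdm
  set K := i * m with hK
  have hKm : m ≤ K := by rw [hK]; omega
  have hmod : K % n = K := Nat.mod_eq_of_lt (by omega)
  rw [hmod, if_neg (by omega)]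

lemma tailBody_succ (q : ℝ) (M : ℕ) :
    tailBody q 1 (M + 1)
      = tailBody q 1 M ++ (1 :: 1 :: List.replicate (kap q (1 + 1 + M)) 0) := by
  simp [tailBody, List.range_succ]

include hm h2 in
lemma block_eq (hcop : Nat.Coprime m n) {j : ℕ} (hj0 : 0 < j) (hjm : j < m) :
    (List.range (((j + 1) * n) / m)).map (fch m n)
      = (List.range ((j * n) / m)).map (fch m n)
        ++ (1 :: 1 :: List.replicate (((j + 1) * n) / m - (j * n) / m - 2) 0) := by
  set P := (j * n) / m with hP
  set P' := ((j + 1) * n) / m with hP'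
  have hgap : P + 2 ≤ P' := by rw [hP, hP']; exact gap_ge2 hm h2 j
  have hsplit : P' = P + (2 + (P' - P - 2)) := by omega
  conv_lhs => rw [hsplit]
  rw [map_range_add, map_range_two_add]
  congr 3
  · have h := f_at_P hm h2 hcop hj0 hjm
    rw [← hP] at h
    simpa using h
  · have h := f_at_P1 hm h2 hcop hj0 hjm
    rw [← hP] at h
    exact h
  · apply map_const_zero
    intro t ht
    have hi1 : P + 2 ≤ P + (2 + t) := by omega
    have hi2 : P + (2 + t) < P' := by omega
    rw [hP] at hi1
    rw [hP, hP'] at hi2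
    exact f_mid hm h2 hj0 _ hi1 hi2

include hm h2 in
lemma tb_eq (hcop : Nat.Coprime m n) :
    ∀ M, M + 1 ≤ m → tailBody ((m : ℝ) / n) 1 M
      = (List.range (((M + 1) * n) / m)).map (fch m n) := by
  intro M
  induction M with
  | zero =>
    intro _
    have h1n : (1 * n) / m = n / m := by rw [one_mul]
    rw [h1n]
    have hd2 := div_ge2 hm h2
    have hsplit : n / m = 1 + (n / m - 1) := by omega
    rw [hsplit, map_range_one_add]
    have hz : fch m n 0 = 1 := f_zero hm
    rw [hz]
    have hrest : (List.range (n / m - 1)).map (fun t => fch m n (1 + t))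
        = List.replicate (n / m - 1) 0 := by
      apply map_const_zero
      intro t ht
      apply f_low hm h2
      · omega
      · omega
    rw [hrest]
    simp [tailBody, kap_one hm h2]
  | succ M ih =>
    intro hM
    have ihh := ih (by omega)
    rw [tailBody_succ, ihh]
    have hb := block_eq hm h2 hcop (Nat.succ_pos M) (show M + 1 < m by omega)
    have hkap : kap ((m : ℝ) / n) (1 + 1 + M)
        = ((M + 1 + 1) * n) / m - ((M + 1) * n) / m - 2 := by
      have h12 : 1 + 1 + M = M + 2 := by omega
      rw [h12, kap_ge2 hm h2 (M + 2) (by omega)]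
      have h21 : M + 2 - 1 = M + 1 := by omega
      rw [h21]
    rw [hkap]
    exact hb.symm

include hm h2 in
lemma cq_eq (hcop : Nat.Coprime m n) :
    cqWord ((m : ℝ) / n) m = (List.range (n + 1)).map (fch m n) := by
  have h1 := tb_eq hm h2 hcop (m - 1) (by omega)
  have hm1 : m - 1 + 1 = m := by omega
  rw [hm1] at h1
  have hmn : (m * n) / m = n := Nat.mul_div_cancel_left n hm
  rw [hmn] at h1
  rw [cqWord, h1, List.range_succ, List.map_append]
  congr 1
  have hfn : fch m n n = 1 := by
    rw [fch, if_pos]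
    left
    rw [Nat.mul_mod_right]
    exact hm
  simp [hfn]

lemma dropLast_map_range (F : ℕ → Fin 2) (k : ℕ) :
    ((List.range (k + 1)).map F).dropLast = (List.range k).map F := by
  rw [List.range_succ, List.map_append]
  simp

include hm h2 in
lemma wq_eq (hcop : Nat.Coprime m n) :
    wqWord ((m : ℝ) / n) m = (List.range (n - 1)).map (fch m n) := by
  rw [wqWord, cq_eq hm h2 hcop, dropLast_map_range]
  have e2 : n = (n - 1) + 1 := by omega
  have e3 : List.range n = List.range ((n - 1) + 1) := by rw [← e2]
  conv_lhs => rw [e3]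
  rw [dropLast_map_range]

include h2 in
lemma coprime_shift (hcop : Nat.Coprime m n) {i : ℕ} (hi : i + 1 < n) :
    ((i + 1) * m) % n ≠ 0 := by
  intro h0
  have hdvd : n ∣ (i + 1) * m := Nat.dvd_of_mod_eq_zero h0
  have hni : n ∣ (i + 1) := Nat.Coprime.dvd_of_dvd_mul_right hcop.symm hdvd
  have := Nat.le_of_dvd (Nat.succ_pos i) hni
  omega

include hm h2 in
lemma fg_eq (hcop : Nat.Coprime m n) (i : ℕ) (hi : i < n - 1) :
    fch m n i = gch m n i := by
  have hn' : 0 < n := hn0 h2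
  have hne := coprime_shift h2 hcop (show i + 1 < n by omega)
  simp only [fch, gch]
  set r := (i * m) % n with hr
  set u := ((i + 1) * m) % n with hu
  have hru : u = (r + m) % n := by
    rw [hu, hr]
    have hexp : (i + 1) * m = i * m + m := by ring
    rw [hexp, Nat.mod_add_mod]
  have hrn : r < n := Nat.mod_lt _ hn'
  have hne' : r + m ≠ n := by
    intro hE
    apply hne
    rw [hru, hE, Nat.mod_self]
  rcases mod_two_cases hn' (show r + m < 2 * n by omega) with ⟨ha, hb⟩ | ⟨ha, hb⟩ <;>
    rw [hb] at hru <;> (apply if_eq_if; omega)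

include hm h2 in
lemma fh_rev (hcop : Nat.Coprime m n) (i : ℕ) (hi : i < n - 1) :
    fch m n (n - 2 - i) = hch m n i := by
  have hn' : 0 < n := hn0 h2
  have hne := coprime_shift h2 hcop (show i + 1 < n by omega)
  simp only [fch, hch]
  set t := ((i + 1) * m) % n with ht
  set v := ((i + 2) * m) % n with hv
  set r := ((n - 2 - i) * m) % n with hr
  have htn : t < n := Nat.mod_lt _ hn'
  have hvn : v < n := Nat.mod_lt _ hn'
  have hrn : r < n := Nat.mod_lt _ hn'
  have hvt : v = (t + m) % n := by
    rw [hv, ht]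
    have hexp : (i + 2) * m = (i + 1) * m + m := by ring
    rw [hexp, Nat.mod_add_mod]
  have hsum0 : ((n - 2 - i) * m + (i + 2) * m) % n = 0 := by
    rw [← Nat.add_mul, show (n - 2 - i) + (i + 2) = n by omega]
    exact Nat.mul_mod_right _ _
  have hrv0 : (r + v) % n = 0 := by
    rw [hr, hv, ← Nat.add_mod]
    exact hsum0
  have hrv : r + v = 0 ∨ r + v = n := by
    obtain ⟨k, hk⟩ := Nat.dvd_of_mod_eq_zero hrv0
    have hlt : r + v < 2 * n := by omega
    rw [hk] at hlt
    have hk2 : k < 2 := by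
      rcases Nat.lt_or_ge k 2 with h | h
      · exact h
      · exfalso
        have : n * 2 ≤ n * k := Nat.mul_le_mul_left _ h
        omega
    interval_cases k
    · left; omega
    · right; omega
  rcases mod_two_cases hn' (show t + m < 2 * n by omega) with ⟨ha, hb⟩ | ⟨ha, hb⟩ <;>
    rw [hb] at hvt <;> (apply if_eq_if; omega)

lemma gch_last (hm : 0 < m) (hn' : 0 < n) : gch m n (n - 1) = 1 := by
  rw [gch, if_pos]
  rw [show n - 1 + 1 = n by omega, Nat.mul_mod_right]
  omega

lemma hch_last (hn' : 0 < n) : hch m n (n - 1) = 1 := by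
  rw [hch, if_pos]
  left
  rw [show n - 1 + 1 = n by omega, Nat.mul_mod_right]

include hm h2 in
lemma lb_eq (hcop : Nat.Coprime m n) :
    wqWord ((m : ℝ) / n) m ++ [1] = (List.range n).map (gch m n) := by
  have hn' : 0 < n := hn0 h2
  rw [wq_eq hm h2 hcop]
  have e3 : List.range n = List.range ((n - 1) + 1) := by
    rw [show (n - 1) + 1 = n by omega]
  rw [e3, List.range_succ, List.map_append]
  congr 1
  · apply List.map_congr_left
    intro a ha
    rw [List.mem_range] at ha
    exact fg_eq hm h2 hcop a ha
  · rw [show List.map (gch m n) [n - 1] = [gch m n (n - 1)] from rfl, gch_last hm hn']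

include hm h2 in
lemma la_eq (hcop : Nat.Coprime m n) :
    hwqWord ((m : ℝ) / n) m ++ [1] = (List.range n).map (hch m n) := by
  have hn' : 0 < n := hn0 h2
  rw [hwqWord, wq_eq hm h2 hcop]
  apply List.ext_getElem
  · simp
    omega
  · intro i h1 h2'
    simp only [List.length_append, List.length_reverse, List.length_map,
      List.length_range, List.length_cons, List.length_nil] at h1
    rcases Nat.lt_or_ge i (n - 1) with hlt | hge
    · rw [List.getElem_append_left (by simpa using hlt)]
      rw [List.getElem_reverse]
      simp only [List.getElem_map, List.getElem_range, List.length_map, List.length_range]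
      rw [show n - 1 - 1 - i = n - 2 - i by omega]
      rw [fh_rev hm h2 hcop i hlt]
    · have hie : i = n - 1 := by omega
      rw [List.getElem_append_right (by simpa using hge)]
      simp only [List.getElem_singleton, List.getElem_map, List.getElem_range]
      rw [hie, hch_last hn']

lemma perSeq_eq (F : ℕ → Fin 2) (k : ℕ) (hk : 0 < k) (i : ℕ) :
    perSeq ((List.range k).map F) i = F (i % k) := by
  simp only [perSeq, List.length_map, List.length_range]
  exact getD_map_range F (Nat.mod_lt _ hk)

include hm h2 in
lemma hg_final (s i : ℕ) (hs : (s * m) % n = (n + 1 - 2 * m) % n) :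
    hch m n ((i + s) % n) = gch m n (i % n) := by
  have hn' : 0 < n := hn0 h2
  simp only [hch, gch]
  set u := ((i % n + 1) * m) % n with hu
  set t := (((i + s) % n + 1) * m) % n with htd
  have hun : u < n := Nat.mod_lt _ hn'
  have hmt : t = (u + (n + 1 - 2 * m)) % n := by
    have e1 : (((i + s) % n + 1) * m) % n = ((i + s + 1) * m) % n :=
      Nat.ModEq.mul_right m ((Nat.mod_modEq (i + s) n).add_right 1)
    have e2 : (i + s + 1) * m = (i + 1) * m + s * m := by ring
    have e4 : ((i + 1) * m + s * m) % n = ((i % n + 1) * m + (n + 1 - 2 * m)) % n :=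
      Nat.ModEq.add (Nat.ModEq.mul_right m ((Nat.mod_modEq i n).symm.add_right 1)) hs
    rw [htd, e1, e2, e4, hu]
    exact (Nat.mod_add_mod _ _ _).symm
  rcases mod_two_cases hn' (show u + (n + 1 - 2 * m) < 2 * n by omega) with ⟨ha, hb⟩ | ⟨ha, hb⟩ <;>
    rw [hb] at hmt <;> (apply if_eq_if; omega)

end Main

end Stmt14aux

/-- For rational `q = m/n ∈ (0,1/2)` in lowest terms, `10(ŵ_q1)^∞` is
pre-periodic to `(w_q1)^∞`: some shift of it equals `(w_q1)^∞`. -/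
theorem stmt14 (m n : ℕ) (hm : 0 < m) (hn : 0 < n) (hcop : Nat.Coprime m n)
    (hq : (m : ℝ) / n < 1 / 2) :
    ∃ r : ℕ, shiftSeq r (preperSeq [1, 0] (hwqWord ((m : ℝ) / n) m ++ [1]))
      = perSeq (wqWord ((m : ℝ) / n) m ++ [1]) := by
  classical
  have h2 : 2 * m < n := by
    rw [div_lt_div_iff₀ (by exact_mod_cast hn) (by norm_num : (0:ℝ) < 2)] at hq
    have hq' : (m * 2 : ℕ) < 1 * n := by exact_mod_cast hq
    omega
  haveI : NeZero n := ⟨hn.ne'⟩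
  set z : ZMod n := (↑m)⁻¹ * ((n + 1 - 2 * m : ℕ) : ZMod n) with hz
  refine ⟨z.val + 2, ?_⟩
  have hunit : IsUnit (m : ZMod n) := (ZMod.isUnit_iff_coprime m n).mpr hcop
  have hcast : ((z.val * m : ℕ) : ZMod n) = ((n + 1 - 2 * m : ℕ) : ZMod n) := by
    push_cast
    rw [ZMod.natCast_val, ZMod.cast_id, hz]
    calc (↑m)⁻¹ * ((n + 1 - 2 * m : ℕ) : ZMod n) * (m : ZMod n)
        = ((n + 1 - 2 * m : ℕ) : ZMod n) * ((↑m)⁻¹ * (m : ZMod n)) := by ring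
      _ = ((n + 1 - 2 * m : ℕ) : ZMod n) := by
          rw [ZMod.inv_mul_of_unit _ hunit, mul_one]
  have hs : (z.val * m) % n = (n + 1 - 2 * m) % n :=
    (ZMod.natCast_eq_natCast_iff' _ _ _).mp hcast
  funext i
  simp only [shiftSeq, preperSeq]
  rw [if_neg (by simp; omega)]
  rw [Stmt14aux.la_eq hm h2 hcop, Stmt14aux.lb_eq hm h2 hcop]
  rw [Stmt14aux.perSeq_eq _ _ hn, Stmt14aux.perSeq_eq _ _ hn]
  rw [show i + (z.val + 2) - List.length [(1 : Fin 2), 0] = i + z.val by simp; omega]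
  exact Stmt14aux.hg_final hm h2 z.val i hs
end

section
/- Let q = m/n ∈ ℚ ∩ (0,1/2) (in lowest terms) and let 1 ≤ j ≤ m. Consider the finite words u = 1 0^{κ_j(q)} 11 0^{κ_{j+1}(q)} 11 ⋯ 11 0^{κ_m(q)} 1 and v = 1 0^{κ_1(q)−1} 11 0^{κ_2(q)} 11 ⋯ 11 0^{κ_m(q)} 1. Then u and v differ at some index strictly smaller than the shorter of their lengths, and u is greater than v in the unimodal order: at the least index r where they differ, ∑_{i=0}^r u_i is odd. -/
open Set

def myBody (f : ℕ → ℕ) (N : ℕ) : List (Fin 2) :=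
  1 :: (List.replicate (f 0) 0 ++
    (((List.range N).map fun t => 1 :: 1 :: List.replicate (f (t + 1)) 0).flatten))

def pw (a : ℕ) : List (Fin 2) := 1 :: (List.replicate a 0 ++ [1])

lemma pw_len (a : ℕ) : (pw a).length = a + 2 := by simp [pw]

lemma myBody_succ (f : ℕ → ℕ) (N : ℕ) :
    myBody f (N + 1) ++ [1] = pw (f 0) ++ (myBody (fun t => f (t + 1)) N ++ [1]) := by
  simp [myBody, pw, List.range_succ_eq_map, List.map_map, Function.comp_def, Nat.succ_eq_add_one]

lemma rep_getD (k i : ℕ) : (List.replicate k (0 : Fin 2)).getD i 0 = 0 := by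
  simp [List.getD_eq_getElem?_getD, List.getElem?_getD_replicate_default_eq]

lemma body_getD_zero (f : ℕ → ℕ) (N : ℕ) : (myBody f N ++ [1]).getD 0 0 = 1 := rfl

lemma body_getD_succ (f : ℕ → ℕ) (N : ℕ) {s : ℕ} (hs : s < f 0) :
    (myBody f N ++ [1]).getD (s + 1) 0 = 0 := by
  have : myBody f N ++ [1] = 1 :: (List.replicate (f 0) 0 ++
      ((((List.range N).map fun t => 1 :: 1 :: List.replicate (f (t + 1)) 0).flatten) ++ [1])) := by
    simp [myBody]
  rw [this, List.getD_cons_succ, List.getD_append _ _ _ _ (by simpa using hs), rep_getD]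

lemma body_getD_after (g : ℕ → ℕ) (M : ℕ) :
    (myBody g M ++ [1]).getD (g 0 + 1) 0 = 1 := by
  have h : myBody g M ++ [1] = 1 :: (List.replicate (g 0) 0 ++
      ((((List.range M).map fun t => 1 :: 1 :: List.replicate (g (t + 1)) 0).flatten) ++ [1])) := by
    simp [myBody]
  rw [h, List.getD_cons_succ,
    List.getD_append_right _ _ _ _ (by simp), List.length_replicate, Nat.sub_self]
  cases M with
  | zero => rfl
  | succ M' => simp [List.range_succ_eq_map]

lemma body_len (f : ℕ → ℕ) (N : ℕ) : f 0 + 2 ≤ (myBody f N ++ [1]).length := by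
  simp [myBody]

lemma pw_getD_lt (a : ℕ) (w : List (Fin 2)) {i : ℕ} (hi : i < a + 2) :
    (pw a ++ w).getD i 0 = (pw a).getD i 0 :=
  List.getD_append _ _ _ _ (by rw [pw_len]; omega)

lemma pw_getD_ge (a : ℕ) (w : List (Fin 2)) {i : ℕ} (hi : a + 2 ≤ i) :
    (pw a ++ w).getD i 0 = w.getD (i - (a + 2)) 0 := by
  rw [List.getD_append_right _ _ _ _ (by rw [pw_len]; omega), pw_len]

lemma prefix_sum (a : ℕ) (w : List (Fin 2)) :
    (∑ i ∈ Finset.range (a + 2), (((pw a ++ w).getD i 0 : ℕ))) = 2 := by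
  have step1 : (∑ i ∈ Finset.range (a + 2), (((pw a ++ w).getD i 0 : ℕ)))
      = ∑ i ∈ Finset.range (a + 2), (((pw a).getD i 0 : ℕ)) :=
    Finset.sum_congr rfl (fun i hi => by rw [pw_getD_lt a w (Finset.mem_range.mp hi)])
  rw [step1, show a + 2 = (a + 1) + 1 from rfl, Finset.sum_range_succ']
  simp only [pw, List.getD_cons_succ, List.getD_cons_zero]
  rw [Finset.sum_range_succ]
  have h1 : (List.replicate a (0:Fin 2) ++ [1]).getD a 0 = 1 := by
    rw [List.getD_append_right _ _ _ _ (by simp), List.length_replicate, Nat.sub_self]; rfl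
  have h0 : ∀ i ∈ Finset.range a,
      (((List.replicate a (0:Fin 2) ++ [1]).getD i 0 : ℕ)) = (((0:Fin 2) : ℕ)) :=
    fun i hi => by
      rw [List.getD_append _ _ _ _ (by simpa using Finset.mem_range.mp hi), rep_getD]
  rw [h1, Finset.sum_congr rfl h0]
  simp

lemma mainLemma : ∀ (t₀ : ℕ) (f g : ℕ → ℕ) (N M : ℕ), t₀ ≤ N → t₀ ≤ M →
    (∀ s, s < t₀ → f s = g s) → g t₀ < f t₀ →
    ∃ r : ℕ, r < min (myBody f N ++ [1]).length (myBody g M ++ [1]).length ∧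
      (∀ i, i < r → (myBody f N ++ [1]).getD i 0 = (myBody g M ++ [1]).getD i 0) ∧
      (myBody f N ++ [1]).getD r 0 ≠ (myBody g M ++ [1]).getD r 0 ∧
      Odd (∑ i ∈ Finset.range (r + 1), (((myBody f N ++ [1]).getD i 0 : ℕ))) := by
  intro t₀
  induction t₀ with
  | zero =>
    intro f g N M hN hM hpre hlt
    refine ⟨g 0 + 1, ?_, ?_, ?_, ?_⟩
    · have h1 := body_len f N
      have h2 := body_len g M
      rw [lt_min_iff]
      omega
    · intro i hi
      match i with
      | 0 => rw [body_getD_zero, body_getD_zero]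
      | (s+1) =>
        rw [body_getD_succ f N (by omega), body_getD_succ g M (by omega)]
    · rw [body_getD_succ f N (by omega), body_getD_after]
      decide
    · have hs : (∑ i ∈ Finset.range (g 0 + 1 + 1), (((myBody f N ++ [1]).getD i 0 : ℕ))) = 1 := by
        rw [Finset.sum_range_succ', body_getD_zero]
        have h0 : ∀ i ∈ Finset.range (g 0 + 1),
            (((myBody f N ++ [1]).getD (i + 1) 0 : ℕ)) = (((0:Fin 2) : ℕ)) := by
          intro i hi
          have := Finset.mem_range.mp hi
          rw [body_getD_succ f N (by omega)]
        rw [Finset.sum_congr rfl h0]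
        simp
      rw [hs]; exact odd_one
  | succ t ih =>
    intro f g N M hN hM hpre hlt
    match N, M with
    | (N'+1), (M'+1) =>
      have hf0 : f 0 = g 0 := hpre 0 (by omega)
      obtain ⟨r', hr'len, hr'pre, hr'ne, hr'odd⟩ :=
        ih (fun t => f (t+1)) (fun t => g (t+1)) N' M' (by omega) (by omega)
          (fun s hs => hpre (s+1) (by omega)) hlt
      rw [lt_min_iff] at hr'len
      have hu : myBody f (N'+1) ++ [1] =
          pw (f 0) ++ (myBody (fun t => f (t+1)) N' ++ [1]) := myBody_succ f N'
      have hv : myBody g (M'+1) ++ [1] =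
          pw (f 0) ++ (myBody (fun t => g (t+1)) M' ++ [1]) := by
        rw [hf0]; exact myBody_succ g M'
      refine ⟨f 0 + 2 + r', ?_, ?_, ?_, ?_⟩
      · rw [hu, hv, lt_min_iff]
        simp only [List.length_append, pw_len] at hr'len ⊢
        omega
      · intro i hi
        rw [hu, hv]
        rcases lt_or_ge i (f 0 + 2) with h | h
        · rw [pw_getD_lt _ _ h, pw_getD_lt _ _ h]
        · rw [pw_getD_ge _ _ h, pw_getD_ge _ _ h]
          exact hr'pre (i - (f 0 + 2)) (by omega)
      · rw [hu, hv, pw_getD_ge _ _ (by omega), pw_getD_ge _ _ (by omega),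
          show f 0 + 2 + r' - (f 0 + 2) = r' by omega]
        exact hr'ne
      · rw [hu, show f 0 + 2 + r' + 1 = (f 0 + 2) + (r' + 1) by omega, Finset.sum_range_add,
          prefix_sum (f 0) _]
        have hsplit : ∀ i ∈ Finset.range (r' + 1),
            (((pw (f 0) ++ (myBody (fun t => f (t+1)) N' ++ [1])).getD (f 0 + 2 + i) 0 : ℕ)) =
            (((myBody (fun t => f (t+1)) N' ++ [1]).getD i 0 : ℕ)) := by
          intro i hi
          rw [pw_getD_ge _ _ (by omega), show f 0 + 2 + i - (f 0 + 2) = i by omega]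
        rw [Finset.sum_congr rfl hsplit]
        obtain ⟨k, hk⟩ := hr'odd
        exact ⟨k + 1, by omega⟩


lemma floor_nat_div (a m n : ℕ) (hm : 0 < m) :
    ⌊(a : ℝ) / ((m : ℝ) / n)⌋ = ((a * n / m : ℕ) : ℤ) := by
  have h1 : (a : ℝ) / ((m : ℝ) / n) = ((a * n : ℕ) : ℝ) / ((m : ℕ) : ℝ) := by
    push_cast
    field_simp
  rw [h1, ← Int.natCast_floor_eq_floor (by positivity), Nat.floor_div_eq_div]

lemma kap_one (m n : ℕ) (hm : 0 < m) :
    kap ((m : ℝ) / n) 1 = n / m - 1 := by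
  have h := floor_nat_div 1 m n hm
  rw [Nat.cast_one] at h
  simp only [kap, if_true, eq_self_iff_true, reduceIte, one_mul, h]
  omega

lemma kap_ge2 (m n : ℕ) (hm : 0 < m) (i : ℕ) (hi : 2 ≤ i) :
    kap ((m : ℝ) / n) i = i * n / m - (i - 1) * n / m - 2 := by
  have h1 := floor_nat_div i m n hm
  have h2 := floor_nat_div (i - 1) m n hm
  have hc : (((i - 1 : ℕ) : ℝ)) = (i : ℝ) - 1 := by
    have h1i : (1 : ℕ) ≤ i := by omega
    push_cast [h1i]
    ring
  rw [hc] at h2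
  simp only [kap, if_neg (by omega : ¬ i = 1), h1, h2]
  omega

/-- The block-size function of the tail word starting at block `j`. -/
noncomputable def Ffun (q : ℝ) (j : ℕ) : ℕ → ℕ := fun t => kap q (j + t)

/-- The block-size function of the low word. -/
noncomputable def Gfun (q : ℝ) : ℕ → ℕ := fun t => if t = 0 then kap q 1 - 1 else kap q (t + 1)

lemma exists_t0 (m n j : ℕ) (hm : 0 < m) (hcop : Nat.Coprime m n)
    (hmn : 2 * m < n) (hj1 : 1 ≤ j) (hjm : j ≤ m) :
    ∃ t₀, t₀ ≤ m - j ∧ (∀ s, s < t₀ → Ffun ((m : ℝ) / n) j s = Gfun ((m : ℝ) / n) s) ∧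
      Gfun ((m : ℝ) / n) t₀ < Ffun ((m : ℝ) / n) j t₀ := by
  classical
  have hn : 0 < n := by omega
  have hdm : 2 ≤ n / m := (Nat.le_div_iff_mul_le hm).mpr (by omega)
  have hG0 : Gfun ((m : ℝ) / n) 0 = n / m - 2 := by
    have h0 : Gfun ((m : ℝ) / n) 0 = kap ((m : ℝ) / n) 1 - 1 := by
      unfold Gfun
      rw [if_pos rfl]
    rw [h0, kap_one m n hm]
    omega
  rcases eq_or_lt_of_le hj1 with hj | hj2
  · -- j = 1
    refine ⟨0, by omega, by omega, ?_⟩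
    rw [hG0]
    have hF0 : Ffun ((m : ℝ) / n) j 0 = n / m - 1 := by
      simp only [Ffun]
      rw [show j + 0 = 1 by omega, kap_one m n hm]
    omega
  · -- 2 ≤ j
    have hj2' : 2 ≤ j := hj2
    have hstep : ∀ i, 2 ≤ i → (i - 1) * n / m + (kap ((m : ℝ) / n) i + 2) = i * n / m := by
      intro i hi
      have hk := kap_ge2 m n hm i hi
      have hadd : (i - 1) * n + n = i * n := by
        cases i with
        | zero => omega
        | succ i' => rw [Nat.succ_sub_one, Nat.succ_mul]
      have hsuper : (i - 1) * n / m + n / m ≤ i * n / m := by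
        have h := Nat.add_div_le_add_div ((i - 1) * n) n m
        rw [hadd] at h
        exact h
      omega
    have hSF : ∀ t, (j - 1) * n / m +
        ((∑ s ∈ Finset.range (t + 1), Ffun ((m : ℝ) / n) j s) + 2 * (t + 1)) = (j + t) * n / m := by
      intro t
      induction t with
      | zero =>
        have hst := hstep j hj2'
        rw [Finset.sum_range_succ, Finset.sum_range_zero]
        have hF0 : Ffun ((m : ℝ) / n) j 0 = kap ((m : ℝ) / n) j := by
          simp only [Ffun, Nat.add_zero]
        rw [hF0, show j + 0 = j by omega]
        omega
      | succ t iht =>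
        rw [Finset.sum_range_succ]
        have hF : Ffun ((m : ℝ) / n) j (t + 1) = kap ((m : ℝ) / n) (j + t + 1) := by
          simp only [Ffun]
          rw [show j + (t + 1) = j + t + 1 by omega]
        have hst := hstep (j + t + 1) (by omega)
        rw [show j + t + 1 - 1 = j + t by omega] at hst
        rw [hF, show j + (t + 1) = j + t + 1 by omega]
        omega
    have hSG : ∀ t, (∑ s ∈ Finset.range (t + 1), Gfun ((m : ℝ) / n) s) + 2 * (t + 1)
        = (t + 1) * n / m := by
      intro t
      induction t with
      | zero =>
        rw [Finset.sum_range_succ, Finset.sum_range_zero, hG0,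
          show (0 : ℕ) + 1 = 1 from rfl, one_mul]
        omega
      | succ t iht =>
        rw [Finset.sum_range_succ]
        have hGt : Gfun ((m : ℝ) / n) (t + 1) = kap ((m : ℝ) / n) (t + 2) := by
          unfold Gfun
          rw [if_neg (by omega : ¬ t + 1 = 0)]
        have hst := hstep (t + 2) (by omega)
        rw [show t + 2 - 1 = t + 1 by omega] at hst
        rw [hGt, show t + 1 + 1 = t + 2 from rfl]
        omega
    have hBm : (j - 1) * n / m + (m - j + 1) * n / m + 1 ≤ m * n / m := by
      have hr1lt : ((j - 1) * n) % m < m := Nat.mod_lt _ hm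
      have hr2lt : ((m - j + 1) * n) % m < m := Nat.mod_lt _ hm
      have hr1pos : 0 < ((j - 1) * n) % m := by
        rcases Nat.eq_zero_or_pos (((j - 1) * n) % m) with h0 | h
        · exfalso
          have hdvd : m ∣ (j - 1) * n := Nat.dvd_of_mod_eq_zero h0
          have hdj : m ∣ (j - 1) := (Nat.Coprime.dvd_of_dvd_mul_right hcop) hdvd
          have := Nat.le_of_dvd (by omega) hdj
          omega
        · exact h
      have e1 := Nat.div_add_mod ((j - 1) * n) m
      have e2 := Nat.div_add_mod ((m - j + 1) * n) m
      have esum : (j - 1) * n + (m - j + 1) * n = m * n := by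
        rw [← Nat.add_mul, show (j - 1) + (m - j + 1) = m by omega]
      have hd1 : m * ((j - 1) * n / m + (m - j + 1) * n / m)
          = m * ((j - 1) * n / m) + m * ((m - j + 1) * n / m) := by ring
      have hd2 : m * ((j - 1) * n / m + (m - j + 1) * n / m + 2)
          = m * ((j - 1) * n / m) + m * ((m - j + 1) * n / m) + 2 * m := by ring
      have hX1 : (j - 1) * n / m + (m - j + 1) * n / m < n :=
        Nat.lt_of_mul_lt_mul_left (a := m) (by omega)
      have hX2 : n < (j - 1) * n / m + (m - j + 1) * n / m + 2 :=
        Nat.lt_of_mul_lt_mul_left (a := m) (by omega)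
      have hmn' : m * n / m = n := Nat.mul_div_cancel_left _ hm
      omega
    have hexb : ∃ t, t ≤ m - j ∧ Ffun ((m : ℝ) / n) j t ≠ Gfun ((m : ℝ) / n) t := by
      by_contra hall
      push_neg at hall
      have hseq : (∑ s ∈ Finset.range ((m - j) + 1), Ffun ((m : ℝ) / n) j s)
          = ∑ s ∈ Finset.range ((m - j) + 1), Gfun ((m : ℝ) / n) s :=
        Finset.sum_congr rfl (fun s hs => hall s (by
          have := Finset.mem_range.mp hs; omega))
      have h1 := hSF (m - j)
      have h2 := hSG (m - j)
      rw [show j + (m - j) = m by omega] at h1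
      omega
    obtain ⟨w, hw1, hw2⟩ := hexb
    have hex : ∃ t, Ffun ((m : ℝ) / n) j t ≠ Gfun ((m : ℝ) / n) t := ⟨w, hw2⟩
    have ht0le : Nat.find hex ≤ m - j := le_trans (Nat.find_min' hex hw2) hw1
    have hpre : ∀ s, s < Nat.find hex → Ffun ((m : ℝ) / n) j s = Gfun ((m : ℝ) / n) s :=
      fun s hs => not_not.mp (Nat.find_min hex hs)
    refine ⟨Nat.find hex, ht0le, hpre, ?_⟩
    have hne := Nat.find_spec hex
    have h1 := hSF (Nat.find hex)
    have h2 := hSG (Nat.find hex)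
    have hsup := Nat.add_div_le_add_div ((j - 1) * n) ((Nat.find hex + 1) * n) m
    rw [show (j - 1) * n + (Nat.find hex + 1) * n = (j + Nat.find hex) * n by
      rw [← Nat.add_mul]; congr 1; omega] at hsup
    have hprev : (∑ s ∈ Finset.range (Nat.find hex), Ffun ((m : ℝ) / n) j s)
        = ∑ s ∈ Finset.range (Nat.find hex), Gfun ((m : ℝ) / n) s :=
      Finset.sum_congr rfl (fun s hs => hpre s (Finset.mem_range.mp hs))
    rw [Finset.sum_range_succ] at h1
    rw [Finset.sum_range_succ] at h2
    rw [hprev] at h1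
    omega

lemma tailBody_eq (q : ℝ) (j M : ℕ) : tailBody q j M = myBody (Ffun q j) M := by
  have h : ∀ t : ℕ, (1 :: 1 :: List.replicate (kap q (j + 1 + t)) (0 : Fin 2) : List (Fin 2)) =
      1 :: 1 :: List.replicate (Ffun q j (t + 1)) 0 := by
    intro t
    unfold Ffun
    rw [show j + (t + 1) = j + 1 + t by omega]
  have h0 : Ffun q j 0 = kap q j := by
    unfold Ffun
    rw [Nat.add_zero]
  simp only [tailBody, myBody, h, h0]

lemma lowBody_eq (q : ℝ) (M : ℕ) : lowBody q M = myBody (Gfun q) M := by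
  have h : ∀ t : ℕ, (1 :: 1 :: List.replicate (kap q (2 + t)) (0 : Fin 2) : List (Fin 2)) =
      1 :: 1 :: List.replicate (Gfun q (t + 1)) 0 := by
    intro t
    unfold Gfun
    rw [if_neg (by omega : ¬ t + 1 = 0), show t + 1 + 1 = 2 + t by omega]
  have h0 : Gfun q 0 = kap q 1 - 1 := by
    unfold Gfun
    rw [if_pos rfl]
  simp only [lowBody, myBody, h, h0]

lemma tailWord_eq (q : ℝ) (j mm : ℕ) :
    tailWord q j mm = myBody (Ffun q j) (mm - j) ++ [1] := by
  unfold tailWord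
  rw [tailBody_eq]

lemma lowWord_eq (q : ℝ) (mm : ℕ) :
    lowWord q mm = myBody (Gfun q) (mm - 1) ++ [1] := by
  unfold lowWord
  rw [lowBody_eq]

/-- For rational `q = m/n ∈ (0,1/2)` and `1 ≤ j ≤ m`, the word
`u = 1 0^{κ_j} 11 0^{κ_{j+1}} ⋯ 11 0^{κ_m} 1` disagrees with
`v = 1 0^{κ_1 - 1} 11 0^{κ_2} ⋯ 11 0^{κ_m} 1` within the shorter of their lengths, and is
greater in the unimodal order: at the least index of disagreement the sum of the entries of `u`
up to that index is odd. -/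
theorem stmt15 (m n : ℕ) (hm : 0 < m) (hn : 0 < n) (hcop : Nat.Coprime m n)
    (hq : (m : ℝ) / n < 1 / 2) (j : ℕ) (hj1 : 1 ≤ j) (hjm : j ≤ m) :
    ∃ r : ℕ,
      r < min (tailWord ((m : ℝ) / n) j m).length (lowWord ((m : ℝ) / n) m).length ∧
      (∀ i, i < r →
        (tailWord ((m : ℝ) / n) j m).getD i 0 = (lowWord ((m : ℝ) / n) m).getD i 0) ∧
      (tailWord ((m : ℝ) / n) j m).getD r 0 ≠ (lowWord ((m : ℝ) / n) m).getD r 0 ∧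
      Odd (∑ i ∈ Finset.range (r + 1), (((tailWord ((m : ℝ) / n) j m).getD i 0 : ℕ))) := by
  have hn2 : 2 * m < n := by
    have hnR : (0 : ℝ) < n := by exact_mod_cast hn
    rw [div_lt_div_iff₀ hnR (by norm_num)] at hq
    have h2 : (2 * m : ℝ) < n := by linarith
    exact_mod_cast h2
  obtain ⟨t₀, ht0le, hpre, hlt⟩ := exists_t0 m n j hm hcop hn2 hj1 hjm
  have hmain := mainLemma t₀ (Ffun ((m : ℝ) / n) j) (Gfun ((m : ℝ) / n)) (m - j) (m - 1)
    ht0le (by omega) hpre hlt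
  rw [tailWord_eq, lowWord_eq]
  exact hmain
end
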